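/- arXiv:1304.7466 — 3 statements merged into one kernel-verified Lean document; each statement's English description precedes it below -/
import Mathlib

section
/- A graded functor (φ, F) : (𝒱, 𝔟) → (𝒰, 𝔞) between map-graded categories is cartesian with respect to the forgetful functor Ψ_1 : Map → Mas if and only if for every v : V → V' in 𝒱, B ∈ 𝔟_V, B' ∈ 𝔟_{V'}, the map 𝔟_v(B,B') → 𝔞_{φ(v)}(F(B), F(B')) is an isomorphism of k-modules, i.e. if and only if (φ, F) is subcartesian. -/
open CategoryTheory

universe u

namespace MapGr

variable (k : Type u) [CommRing k]

/-- A (`k`-linear) map-graded category `(𝒰, 𝔞)`: a set `𝔞_U` of objects over every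
`U ∈ 𝒰`, a `k`-module `𝔞_u(B, A)` of morphisms over every `u : U ⟶ U'` in `𝒰`, together
with associative, unital, `k`-bilinear composition maps. -/
structure GradedCat (𝒰 : Type u) [Category.{u} 𝒰] : Type (u + 1) where
  Obj : 𝒰 → Type u
  Hom : ∀ {X Y : 𝒰}, (X ⟶ Y) → Obj X → Obj Y → ModuleCat.{u} k
  comp : ∀ {X Y Z : 𝒰} {f : Y ⟶ Z} {g : X ⟶ Y} {C : Obj X} {B : Obj Y} {A : Obj Z},
    Hom f B A → Hom g C B → Hom (g ≫ f) C A
  id : ∀ {X : 𝒰} (A : Obj X), Hom (𝟙 X) A A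
  comp_add_left : ∀ {X Y Z : 𝒰} {f : Y ⟶ Z} {g : X ⟶ Y} {C : Obj X} {B : Obj Y}
    {A : Obj Z} (x x' : Hom f B A) (y : Hom g C B),
    comp (x + x') y = comp x y + comp x' y
  comp_add_right : ∀ {X Y Z : 𝒰} {f : Y ⟶ Z} {g : X ⟶ Y} {C : Obj X} {B : Obj Y}
    {A : Obj Z} (x : Hom f B A) (y y' : Hom g C B),
    comp x (y + y') = comp x y + comp x y'
  comp_smul_left : ∀ {X Y Z : 𝒰} {f : Y ⟶ Z} {g : X ⟶ Y} {C : Obj X} {B : Obj Y}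
    {A : Obj Z} (r : k) (x : Hom f B A) (y : Hom g C B),
    comp (r • x) y = r • comp x y
  comp_smul_right : ∀ {X Y Z : 𝒰} {f : Y ⟶ Z} {g : X ⟶ Y} {C : Obj X} {B : Obj Y}
    {A : Obj Z} (r : k) (x : Hom f B A) (y : Hom g C B),
    comp x (r • y) = r • comp x y
  comp_id : ∀ {X Y : 𝒰} {f : X ⟶ Y} {B : Obj X} {A : Obj Y} (x : Hom f B A),
    HEq (comp x (id B)) x
  id_comp : ∀ {X Y : 𝒰} {f : X ⟶ Y} {B : Obj X} {A : Obj Y} (x : Hom f B A),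
    HEq (comp (id A) x) x
  assoc : ∀ {W X Y Z : 𝒰} {f : Y ⟶ Z} {g : X ⟶ Y} {h : W ⟶ X} {D : Obj W} {C : Obj X}
    {B : Obj Y} {A : Obj Z} (x : Hom f B A) (y : Hom g C B) (z : Hom h D C),
    HEq (comp (comp x y) z) (comp x (comp y z))

variable {k}
variable {𝒰 : Type u} [Category.{u} 𝒰]

namespace GradedCat

variable (𝔞 : GradedCat k 𝒰)

/-- Transport of graded morphisms along an equality of underlying morphisms of `𝒰`. -/
def Hcast {X Y : 𝒰} {f g : X ⟶ Y} (h : f = g) {B : 𝔞.Obj X} {A : 𝔞.Obj Y}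
    (x : 𝔞.Hom f B A) : 𝔞.Hom g B A :=
  _root_.cast (by rw [h]) x

theorem Hcast_heq {X Y : 𝒰} {f g : X ⟶ Y} (h : f = g) {B : 𝔞.Obj X} {A : 𝔞.Obj Y}
    (x : 𝔞.Hom f B A) : HEq (𝔞.Hcast h x) x :=
  cast_heq _ _

theorem Hcast_add {X Y : 𝒰} {f g : X ⟶ Y} (h : f = g) {B : 𝔞.Obj X} {A : 𝔞.Obj Y}
    (x y : 𝔞.Hom f B A) : 𝔞.Hcast h (x + y) = 𝔞.Hcast h x + 𝔞.Hcast h y := by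
  subst h; rfl

theorem Hcast_smul {X Y : 𝒰} {f g : X ⟶ Y} (h : f = g) {B : 𝔞.Obj X} {A : 𝔞.Obj Y}
    (r : k) (x : 𝔞.Hom f B A) : 𝔞.Hcast h (r • x) = r • 𝔞.Hcast h x := by
  subst h; rfl

theorem comp_congr {X Y Z : 𝒰} {f f' : Y ⟶ Z} (hf : f = f') {g g' : X ⟶ Y} (hg : g = g')
    {C : 𝔞.Obj X} {B : 𝔞.Obj Y} {A : 𝔞.Obj Z} {x : 𝔞.Hom f B A} {x' : 𝔞.Hom f' B A}
    (hx : HEq x x') {y : 𝔞.Hom g C B} {y' : 𝔞.Hom g' C B} (hy : HEq y y') :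
    HEq (𝔞.comp x y) (𝔞.comp x' y') := by
  subst hf; subst hg; rw [eq_of_heq hx, eq_of_heq hy]

end GradedCat

variable {𝒱 : Type u} [Category.{u} 𝒱]

/-- The `𝒱`-graded category `𝔞^φ` obtained by restricting a `𝒰`-graded category `𝔞`
along a functor `φ : 𝒱 ⥤ 𝒰`:  `(𝔞^φ)_V = 𝔞_{φ V}` and `(𝔞^φ)_v(A, A') = 𝔞_{φ v}(A, A')`. -/
def GradedCat.restrict (φ : 𝒱 ⥤ 𝒰) (𝔞 : GradedCat k 𝒰) : GradedCat k 𝒱 where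
  Obj V := 𝔞.Obj (φ.obj V)
  Hom f B A := 𝔞.Hom (φ.map f) B A
  comp x y := 𝔞.Hcast (φ.map_comp _ _).symm (𝔞.comp x y)
  id A := 𝔞.Hcast (φ.map_id _).symm (𝔞.id A)
  comp_add_left x x' y := by (try dsimp only); rw [𝔞.comp_add_left, 𝔞.Hcast_add]
  comp_add_right x y y' := by (try dsimp only); rw [𝔞.comp_add_right, 𝔞.Hcast_add]
  comp_smul_left r x y := by (try dsimp only); rw [𝔞.comp_smul_left, 𝔞.Hcast_smul]
  comp_smul_right r x y := by (try dsimp only); rw [𝔞.comp_smul_right, 𝔞.Hcast_smul]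
  comp_id x :=
    ((𝔞.Hcast_heq _ _).trans
      ((𝔞.comp_congr rfl (φ.map_id _) HEq.rfl (𝔞.Hcast_heq _ _)).trans (𝔞.comp_id _)))
  id_comp x :=
    ((𝔞.Hcast_heq _ _).trans
      ((𝔞.comp_congr (φ.map_id _) rfl (𝔞.Hcast_heq _ _) HEq.rfl).trans (𝔞.id_comp _)))
  assoc x y z := by
    refine ((𝔞.Hcast_heq _ _).trans ?_).trans (𝔞.Hcast_heq _ _).symm
    refine ((𝔞.comp_congr (φ.map_comp _ _) rfl (𝔞.Hcast_heq _ _) HEq.rfl).trans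
      (𝔞.assoc _ _ _)).trans ?_
    exact 𝔞.comp_congr rfl (φ.map_comp _ _).symm HEq.rfl (𝔞.Hcast_heq _ _).symm

variable (k)

/-- A graded functor `(φ, F) : (𝒱, 𝔟) → (𝒰, 𝔞)` over a functor `φ : 𝒱 ⥤ 𝒰`: maps
`F_V : 𝔟_V → 𝔞_{φ V}` on objects and `k`-linear maps `𝔟_v(B, B') → 𝔞_{φ v}(F B, F B')`
on graded morphisms, preserving composition and identities. -/
structure GradedFunctor (φ : 𝒱 ⥤ 𝒰) (𝔟 : GradedCat k 𝒱) (𝔞 : GradedCat k 𝒰) :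
    Type u where
  obj : ∀ {V : 𝒱}, 𝔟.Obj V → 𝔞.Obj (φ.obj V)
  map : ∀ {V V' : 𝒱} (f : V ⟶ V') {B : 𝔟.Obj V} {B' : 𝔟.Obj V'},
    𝔟.Hom f B B' → 𝔞.Hom (φ.map f) (obj B) (obj B')
  map_add : ∀ {V V' : 𝒱} (f : V ⟶ V') {B : 𝔟.Obj V} {B' : 𝔟.Obj V'}
    (x y : 𝔟.Hom f B B'), map f (x + y) = map f x + map f y
  map_smul : ∀ {V V' : 𝒱} (f : V ⟶ V') {B : 𝔟.Obj V} {B' : 𝔟.Obj V'} (r : k)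
    (x : 𝔟.Hom f B B'), map f (r • x) = r • map f x
  map_id : ∀ {V : 𝒱} (B : 𝔟.Obj V), HEq (map (𝟙 V) (𝔟.id B)) (𝔞.id (obj B))
  map_comp : ∀ {V V' V'' : 𝒱} {f : V' ⟶ V''} {g : V ⟶ V'} {C : 𝔟.Obj V} {B : 𝔟.Obj V'}
    {A : 𝔟.Obj V''} (x : 𝔟.Hom f B A) (y : 𝔟.Hom g C B),
    HEq (map (g ≫ f) (𝔟.comp x y)) (𝔞.comp (map f x) (map g y))

variable {k}

namespace GradedFunctor

variable {φ : 𝒱 ⥤ 𝒰} {𝔟 : GradedCat k 𝒱} {𝔞 : GradedCat k 𝒰}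

theorem map_congr (F : GradedFunctor k φ 𝔟 𝔞) {V V' : 𝒱} {f g : V ⟶ V'} (hfg : f = g)
    {B : 𝔟.Obj V} {B' : 𝔟.Obj V'} {x : 𝔟.Hom f B B'} {y : 𝔟.Hom g B B'} (h : HEq x y) :
    HEq (F.map f x) (F.map g y) := by
  subst hfg; rw [eq_of_heq h]

/-- A graded functor is subcartesian (cartesian with respect to `Map → Mas`) iff all its
maps between graded `Hom`-modules are bijective. -/
def Subcartesian (F : GradedFunctor k φ 𝔟 𝔞) : Prop :=
  ∀ {V V' : 𝒱} (f : V ⟶ V') (B : 𝔟.Obj V) (B' : 𝔟.Obj V'),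
    Function.Bijective (fun x : 𝔟.Hom f B B' => F.map f x)

variable {𝒲 : Type u} [Category.{u} 𝒲] {ψ : 𝒲 ⥤ 𝒱} {𝔠 : GradedCat k 𝒲}

/-- Composition of graded functors. -/
def comp (F : GradedFunctor k φ 𝔟 𝔞) (G : GradedFunctor k ψ 𝔠 𝔟) :
    GradedFunctor k (ψ ⋙ φ) 𝔠 𝔞 where
  obj C := F.obj (G.obj C)
  map := fun {V V'} f {B B'} x => F.map (ψ.map f) (G.map f x)
  map_add := by intro V V' f B B' x y; (try dsimp only); rw [G.map_add, F.map_add]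
  map_smul := by intro V V' f B B' r x; (try dsimp only); rw [G.map_smul, F.map_smul]
  map_id B := (F.map_congr (ψ.map_id _) (G.map_id _)).trans (F.map_id _)
  map_comp x y := (F.map_congr (ψ.map_comp _ _) (G.map_comp _ _)).trans (F.map_comp _ _)

end GradedFunctor

/-- The canonical cartesian graded functor `δ^{φ,𝔞} : (𝒱, 𝔞^φ) → (𝒰, 𝔞)`. -/
def restrictProj (φ : 𝒱 ⥤ 𝒰) (𝔞 : GradedCat k 𝒰) :
    GradedFunctor k φ (𝔞.restrict φ) 𝔞 where
  obj A := A
  map := fun {V V'} _f {B B'} x => x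
  map_add := by intros; rfl
  map_smul := by intros; rfl
  map_id B := 𝔞.Hcast_heq (φ.map_id _).symm (𝔞.id B)
  map_comp x y := 𝔞.Hcast_heq (φ.map_comp _ _).symm (𝔞.comp x y)

theorem restrictProj_subcartesian (φ : 𝒱 ⥤ 𝒰) (𝔞 : GradedCat k 𝒰) :
    (restrictProj φ 𝔞).Subcartesian := by
  intro V V' f B B'
  constructor
  · intro a b h
    exact h
  · intro y
    exact ⟨y, rfl⟩

end MapGr

namespace MapGr

variable {k : Type u} [CommRing k]
variable {𝒱 𝒰 : Type u} [Category.{u} 𝒱] [Category.{u} 𝒰]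

/-- A graded functor `(φ, F) : (𝒱, 𝔟) → (𝒰, 𝔞)` is cartesian with respect to the
forgetful functor `Ψ₁ : Map → Mas` iff for every map-graded category `(𝒲, 𝔠)` and every
morphism of the underlying map-graded sets (a functor `ψ : 𝒲 ⥤ 𝒱` together with object
maps `o_W : 𝔠_W → 𝔟_{ψ W}`), composition with `(φ, F)` is a bijection from the graded
functors `(𝒲, 𝔠) → (𝒱, 𝔟)` lying over `(ψ, o)` to the graded functors
`(𝒲, 𝔠) → (𝒰, 𝔞)` lying over the composite morphism of map-graded sets. -/
def CartesianWrtMas {φ : 𝒱 ⥤ 𝒰} {𝔟 : GradedCat k 𝒱} {𝔞 : GradedCat k 𝒰}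
    (F : GradedFunctor k φ 𝔟 𝔞) : Prop :=
  ∀ (𝒲 : Type u) [Category.{u} 𝒲] (𝔠 : GradedCat k 𝒲) (ψ : 𝒲 ⥤ 𝒱)
    (o : ∀ W : 𝒲, 𝔠.Obj W → 𝔟.Obj (ψ.obj W)),
    Function.Bijective
      (fun G : { G : GradedFunctor k ψ 𝔠 𝔟 // ∀ (W : 𝒲) (C : 𝔠.Obj W), G.obj C = o W C } =>
        (⟨F.comp G.1, fun W C => congrArg (fun B => F.obj B) (G.2 W C)⟩ :
          { H : GradedFunctor k (ψ ⋙ φ) 𝔠 𝔞 //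
            ∀ (W : 𝒲) (C : 𝔠.Obj W), H.obj C = F.obj (o W C) }))

/-!
If every hom-map of `F` is bijective, a graded functor `H` over `ψ ⋙ φ` whose objects are
`F (o W C)` lifts through `F` in exactly one way: by `o` on objects and by the inverse hom-maps
on morphisms.

Conversely, test cartesianness on the `k`-linearisation of the walking arrow. A graded functor
out of it lying over the functor picking `f : V ⟶ V'`, with objects `B` and `B'`, is determined
by the image `x ∈ 𝔟_f(B, B')` of `1` over the arrow, and every `x` occurs. So the bijection
between lifts that cartesianness provides is the hom-map `𝔟_f(B, B') → 𝔞_{φ f}(F B, F B')`.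
-/

namespace GradedCat

variable {𝒲 : Type u} [Category.{u} 𝒲] (𝔞 : GradedCat k 𝒲)

theorem smul_heq_smul {X Y : 𝒲} {f g : X ⟶ Y} (hfg : f = g) {B₁ B₂ : 𝔞.Obj X}
    (hB : B₁ = B₂) {A₁ A₂ : 𝔞.Obj Y} (hA : A₁ = A₂) (r : k) {x : 𝔞.Hom f B₁ A₁}
    {y : 𝔞.Hom g B₂ A₂} (h : HEq x y) : HEq (r • x) (r • y) := by
  subst hfg hB hA; rw [eq_of_heq h]

theorem comp_heq_comp {X Y Z : 𝒲} {f f' : Y ⟶ Z} (hf : f = f') {g g' : X ⟶ Y} (hg : g = g')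
    {C C' : 𝔞.Obj X} (hC : C = C') {B B' : 𝔞.Obj Y} (hB : B = B') {A A' : 𝔞.Obj Z}
    (hA : A = A') {x : 𝔞.Hom f B A} {x' : 𝔞.Hom f' B' A'} (hx : HEq x x')
    {y : 𝔞.Hom g C B} {y' : 𝔞.Hom g' C' B'} (hy : HEq y y') :
    HEq (𝔞.comp x y) (𝔞.comp x' y') := by
  subst hf hg hC hB hA; rw [eq_of_heq hx, eq_of_heq hy]

def objCast {X Y : 𝒲} {f : X ⟶ Y} {B₁ B₂ : 𝔞.Obj X} (hB : B₁ = B₂) {A₁ A₂ : 𝔞.Obj Y}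
    (hA : A₁ = A₂) : 𝔞.Hom f B₁ A₁ →ₗ[k] 𝔞.Hom f B₂ A₂ :=
  (eqToHom (show 𝔞.Hom f B₁ A₁ = 𝔞.Hom f B₂ A₂ by rw [hB, hA])).hom

theorem objCast_heq {X Y : 𝒲} {f : X ⟶ Y} {B₁ B₂ : 𝔞.Obj X} (hB : B₁ = B₂) {A₁ A₂ : 𝔞.Obj Y}
    (hA : A₁ = A₂) (x : 𝔞.Hom f B₁ A₁) : HEq (𝔞.objCast hB hA x) x := by
  subst hB hA; simp [objCast]

theorem comp_Hcast_id_heq {X Y : 𝒲} {f : X ⟶ Y} {i : X ⟶ X} (hi : 𝟙 X = i) {B : 𝔞.Obj X}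
    {A : 𝔞.Obj Y} (x : 𝔞.Hom f B A) : HEq (𝔞.comp x (𝔞.Hcast hi (𝔞.id B))) x := by
  subst hi; exact 𝔞.comp_id x

theorem Hcast_id_comp_heq {X Y : 𝒲} {f : X ⟶ Y} {i : Y ⟶ Y} (hi : 𝟙 Y = i) {B : 𝔞.Obj X}
    {A : 𝔞.Obj Y} (x : 𝔞.Hom f B A) : HEq (𝔞.comp (𝔞.Hcast hi (𝔞.id A)) x) x := by
  subst hi; exact 𝔞.id_comp x

theorem comp_smul_smul {X Y Z : 𝒲} {f : Y ⟶ Z} {g : X ⟶ Y} {C : 𝔞.Obj X} {B : 𝔞.Obj Y}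
    {A : 𝔞.Obj Z} (r s : k) (x : 𝔞.Hom f B A) (y : 𝔞.Hom g C B) :
    𝔞.comp (r • x) (s • y) = (r * s) • 𝔞.comp x y := by
  rw [𝔞.comp_smul_left, 𝔞.comp_smul_right, smul_smul]

variable (k 𝒲) in
/-- The `k`-linearisation of `𝒲`: one object over each `W`, and `k` over each morphism. -/
def unit : GradedCat k 𝒲 where
  Obj _ := PUnit
  Hom _ _ _ := ModuleCat.of k k
  comp x y := (show k from x) * (show k from y)
  id _ := (1 : k)
  comp_add_left x x' y := add_mul (show k from x) (show k from x') (show k from y)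
  comp_add_right x y y' := mul_add (show k from x) (show k from y) (show k from y')
  comp_smul_left r x y := smul_mul_assoc r (show k from x) (show k from y)
  comp_smul_right r x y := mul_smul_comm r (show k from x) (show k from y)
  comp_id x := heq_of_eq (mul_one (show k from x))
  id_comp x := heq_of_eq (one_mul (show k from x))
  assoc x y z := heq_of_eq (mul_assoc (show k from x) (show k from y) (show k from z))

end GradedCat

namespace GradedFunctor

variable {𝒲 : Type u} [Category.{u} 𝒲] {χ : 𝒲 ⥤ 𝒰} {𝔠 : GradedCat k 𝒲} {𝔞 : GradedCat k 𝒰}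

theorem ext {G₁ G₂ : GradedFunctor k χ 𝔠 𝔞}
    (hobj : ∀ (W : 𝒲) (C : 𝔠.Obj W), G₁.obj C = G₂.obj C)
    (hmap : ∀ (W W' : 𝒲) (f : W ⟶ W') (C : 𝔠.Obj W) (C' : 𝔠.Obj W') (x : 𝔠.Hom f C C'),
      HEq (G₁.map f x) (G₂.map f x)) : G₁ = G₂ := by
  obtain ⟨o₁, m₁, _, _, _, _⟩ := G₁
  obtain ⟨o₂, m₂, _, _, _, _⟩ := G₂
  obtain rfl : @o₁ = @o₂ := by funext W C; exact hobj W C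
  obtain rfl : @m₁ = @m₂ := by funext W W' f C C' x; exact eq_of_heq (hmap W W' f C C' x)
  rfl

def mapLinear {𝔟 : GradedCat k 𝒱} {φ : 𝒱 ⥤ 𝒰} (F : GradedFunctor k φ 𝔟 𝔞) {V V' : 𝒱}
    (f : V ⟶ V') (B : 𝔟.Obj V) (B' : 𝔟.Obj V') :
    𝔟.Hom f B B' →ₗ[k] 𝔞.Hom (φ.map f) (F.obj B) (F.obj B') where
  toFun := F.map f
  map_add' := F.map_add f
  map_smul' := F.map_smul f

theorem map_objCast_heq {𝔟 : GradedCat k 𝒱} {φ : 𝒱 ⥤ 𝒰} (F : GradedFunctor k φ 𝔟 𝔞)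
    {V V' : 𝒱} {f : V ⟶ V'} {B₁ B₂ : 𝔟.Obj V} (hB : B₁ = B₂) {B₁' B₂' : 𝔟.Obj V'}
    (hB' : B₁' = B₂') (x : 𝔟.Hom f B₁ B₁') :
    HEq (F.map f (𝔟.objCast hB hB' x)) (F.map f x) := by
  subst hB hB'; rfl

end GradedFunctor

namespace GradedFunctor.Subcartesian

variable {φ : 𝒱 ⥤ 𝒰} {𝔟 : GradedCat k 𝒱} {𝔞 : GradedCat k 𝒰} {F : GradedFunctor k φ 𝔟 𝔞}

noncomputable def homEquiv (hF : F.Subcartesian) {V V' : 𝒱} (f : V ⟶ V') (B : 𝔟.Obj V)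
    (B' : 𝔟.Obj V') :
    𝔟.Hom f B B' ≃ₗ[k] 𝔞.Hom (φ.map f) (F.obj B) (F.obj B') :=
  LinearEquiv.ofBijective (F.mapLinear f B B') (hF f B B')

theorem map_homEquiv_symm (hF : F.Subcartesian) {V V' : 𝒱} (f : V ⟶ V') (B : 𝔟.Obj V)
    (B' : 𝔟.Obj V') (y : 𝔞.Hom (φ.map f) (F.obj B) (F.obj B')) :
    F.map f ((hF.homEquiv f B B').symm y) = y :=
  (hF.homEquiv f B B').apply_symm_apply y

theorem heq_of_map_heq (hF : F.Subcartesian) {V V' : 𝒱} {f g : V ⟶ V'} (hfg : f = g)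
    {B₁ B₂ : 𝔟.Obj V} (hB : B₁ = B₂) {B₁' B₂' : 𝔟.Obj V'} (hB' : B₁' = B₂') {x : 𝔟.Hom f B₁ B₁'}
    {y : 𝔟.Hom g B₂ B₂'} (h : HEq (F.map f x) (F.map g y)) : HEq x y := by
  subst hfg hB hB'
  exact heq_of_eq ((hF f _ _).injective (eq_of_heq h))

variable {𝒲 : Type u} [Category.{u} 𝒲] {𝔠 : GradedCat k 𝒲} {ψ : 𝒲 ⥤ 𝒱}
  (o : ∀ W : 𝒲, 𝔠.Obj W → 𝔟.Obj (ψ.obj W)) (H : GradedFunctor k (ψ ⋙ φ) 𝔠 𝔞)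
  (hH : ∀ (W : 𝒲) (C : 𝔠.Obj W), H.obj C = F.obj (o W C))

noncomputable def lift (hF : F.Subcartesian) : GradedFunctor k ψ 𝔠 𝔟 where
  obj {W} C := o W C
  map {W W'} g {C C'} x :=
    (hF.homEquiv (ψ.map g) (o W C) (o W' C')).symm
      (𝔞.objCast (hH W C) (hH W' C') (H.map g x))
  map_add := by intro W W' g C C' x y; rw [H.map_add, _root_.map_add, _root_.map_add]
  map_smul := by intro W W' g C C' r x; rw [H.map_smul, _root_.map_smul, _root_.map_smul]
  map_id {W} C := by
    refine hF.heq_of_map_heq (ψ.map_id W) rfl rfl ?_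
    rw [map_homEquiv_symm]
    refine ((𝔞.objCast_heq _ _ _).trans (H.map_id C)).trans ?_
    rw [hH W C]
    exact (F.map_id (o W C)).symm
  map_comp {W W' W''} {g g'} {C B A} x y := by
    refine hF.heq_of_map_heq (ψ.map_comp g' g) rfl rfl ?_
    rw [map_homEquiv_symm]
    refine (((𝔞.objCast_heq _ _ _).trans (H.map_comp x y)).trans ?_).trans
      (F.map_comp _ _).symm
    refine 𝔞.comp_heq_comp rfl rfl (hH W C) (hH W' B) (hH W'' A) ?_ ?_ <;>
      rw [map_homEquiv_symm] <;> exact (𝔞.objCast_heq _ _ _).symm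

theorem comp_lift (hF : F.Subcartesian) : F.comp (hF.lift o H hH) = H :=
  GradedFunctor.ext (fun W C => (hH W C).symm) fun W W' g C C' x => by
    refine (heq_of_eq (hF.map_homEquiv_symm _ _ _ _)).trans ?_
    exact 𝔞.objCast_heq _ _ _

theorem cartesianWrtMas (hF : F.Subcartesian) : CartesianWrtMas F := by
  intro 𝒲 _ 𝔠 ψ o
  constructor
  · rintro ⟨G₁, h₁⟩ ⟨G₂, h₂⟩ h
    have hcomp : F.comp G₁ = F.comp G₂ := congrArg Subtype.val h
    refine Subtype.ext (GradedFunctor.ext (fun W C => (h₁ W C).trans (h₂ W C).symm) ?_)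
    intro W W' g C C' x
    refine hF.heq_of_map_heq rfl ((h₁ _ _).trans (h₂ _ _).symm)
      ((h₁ _ _).trans (h₂ _ _).symm) ?_
    exact congr_arg_heq (fun G => G.map g x) hcomp
  · rintro ⟨H, hH⟩
    exact ⟨⟨hF.lift o H hH, fun _ _ => rfl⟩, Subtype.ext (hF.comp_lift o H hH)⟩

end GradedFunctor.Subcartesian

namespace GradedFunctor

variable {𝒲 : Type u} [Category.{u} 𝒲] {𝔞 : GradedCat k 𝒰}

def ofSection (χ : 𝒲 ⥤ 𝒰) (A : ∀ W, 𝔞.Obj (χ.obj W))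
    (e : ∀ {W W'} (h : W ⟶ W'), 𝔞.Hom (χ.map h) (A W) (A W'))
    (e_id : ∀ W, HEq (e (𝟙 W)) (𝔞.id (A W)))
    (e_comp : ∀ {W W' W''} (g : W ⟶ W') (h : W' ⟶ W''),
      HEq (e (g ≫ h)) (𝔞.comp (e h) (e g))) :
    GradedFunctor k χ (GradedCat.unit k 𝒲) 𝔞 where
  obj {W} _ := A W
  map h _ _ r := (show k from r) • e h
  map_add h _ _ r s := add_smul (show k from r) (show k from s) (e h)
  map_smul h _ _ r s := smul_assoc r (show k from s) (e h)
  map_id {W} _ := (heq_of_eq (one_smul k _)).trans (e_id W)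
  map_comp {_ _ _ h g} _ _ _ r s := by
    refine HEq.trans ?_ (heq_of_eq (𝔞.comp_smul_smul _ _ _ _).symm)
    exact 𝔞.smul_heq_smul (χ.map_comp g h) rfl rfl _ (e_comp g h)

end GradedFunctor

/-- The walking arrow `⟨false⟩ ⟶ ⟨true⟩`, a category through its order. -/
abbrev WalkingArrow : Type u := ULift.{u} Bool

namespace WalkingArrow

def arrow : (⟨false⟩ : WalkingArrow.{u}) ⟶ ⟨true⟩ := homOfLE (by decide)

def functorOfHom {V V' : 𝒱} (f : V ⟶ V') : WalkingArrow.{u} ⥤ 𝒱 where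
  obj
    | ⟨false⟩ => V
    | ⟨true⟩ => V'
  map {a b} h := match a, b, h with
    | ⟨false⟩, ⟨false⟩, _ => 𝟙 V
    | ⟨false⟩, ⟨true⟩, _ => f
    | ⟨true⟩, ⟨true⟩, _ => 𝟙 V'
    | ⟨true⟩, ⟨false⟩, h => absurd (leOfHom h) (by decide)
  map_id a := by obtain ⟨_ | _⟩ := a <;> rfl
  map_comp {a b c} g h := by
    obtain ⟨_ | _⟩ := a <;> obtain ⟨_ | _⟩ := b <;> obtain ⟨_ | _⟩ := c <;>
      first
      | exact absurd (leOfHom g) (by decide)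
      | exact absurd (leOfHom h) (by decide)
      | simp

variable {𝔞 : GradedCat k 𝒰} {χ : WalkingArrow.{u} ⥤ 𝒰}

def objOf (A : 𝔞.Obj (χ.obj ⟨false⟩)) (A' : 𝔞.Obj (χ.obj ⟨true⟩)) : ∀ a, 𝔞.Obj (χ.obj a)
  | ⟨false⟩ => A
  | ⟨true⟩ => A'

variable {A : 𝔞.Obj (χ.obj ⟨false⟩)} {A' : 𝔞.Obj (χ.obj ⟨true⟩)}

def homOf (x : 𝔞.Hom (χ.map arrow) A A') :
    ∀ {a b} (h : a ⟶ b), 𝔞.Hom (χ.map h) (objOf A A' a) (objOf A A' b)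
  | ⟨false⟩, ⟨false⟩, _ => 𝔞.Hcast (χ.map_id ⟨false⟩).symm (𝔞.id A)
  | ⟨false⟩, ⟨true⟩, _ => x
  | ⟨true⟩, ⟨true⟩, _ => 𝔞.Hcast (χ.map_id ⟨true⟩).symm (𝔞.id A')
  | ⟨true⟩, ⟨false⟩, h => absurd (leOfHom h) (by decide)

theorem homOf_id (x : 𝔞.Hom (χ.map arrow) A A') (a : WalkingArrow) :
    HEq (homOf x (𝟙 a)) (𝔞.id (objOf A A' a)) := by
  obtain ⟨_ | _⟩ := a <;> exact 𝔞.Hcast_heq (χ.map_id _).symm _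

theorem homOf_comp (x : 𝔞.Hom (χ.map arrow) A A') {a b c : WalkingArrow} (g : a ⟶ b)
    (h : b ⟶ c) : HEq (homOf x (g ≫ h)) (𝔞.comp (homOf x h) (homOf x g)) := by
  obtain ⟨_ | _⟩ := a <;> obtain ⟨_ | _⟩ := b <;> obtain ⟨_ | _⟩ := c
  case false.false.false | true.true.true =>
    exact (𝔞.comp_Hcast_id_heq (χ.map_id _).symm _).symm
  case false.false.true => exact (𝔞.comp_Hcast_id_heq (χ.map_id _).symm x).symm
  case false.true.true => exact (𝔞.Hcast_id_comp_heq (χ.map_id _).symm x).symm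
  all_goals first
    | exact absurd (leOfHom g) (by decide)
    | exact absurd (leOfHom h) (by decide)

def gradedFunctorOf (x : 𝔞.Hom (χ.map arrow) A A') :
    GradedFunctor k χ (GradedCat.unit k WalkingArrow) 𝔞 :=
  GradedFunctor.ofSection χ (objOf A A') (homOf x) (homOf_id x) (homOf_comp x)

theorem gradedFunctorOf_map_arrow (x : 𝔞.Hom (χ.map arrow) A A') (r : k) :
    (gradedFunctorOf x).map arrow (B := ⟨⟩) (B' := ⟨⟩) r = r • x :=
  rfl

theorem gradedFunctorOf_injective :
    Function.Injective (gradedFunctorOf : 𝔞.Hom (χ.map arrow) A A' → _) := by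
  intro x x' h
  have h1 : (1 : k) • x = (1 : k) • x' :=
    eq_of_heq (congr_arg_heq (fun G => G.map arrow (B := ⟨⟩) (B' := ⟨⟩) (1 : k)) h)
  rwa [one_smul, one_smul] at h1

theorem gradedFunctor_ext {G₁ G₂ : GradedFunctor k χ (GradedCat.unit k WalkingArrow) 𝔞}
    (hobj : ∀ a (C : PUnit), G₁.obj (V := a) C = G₂.obj C)
    (harrow : HEq (G₁.map arrow (B := ⟨⟩) (B' := ⟨⟩) (1 : k))
      (G₂.map arrow (B := ⟨⟩) (B' := ⟨⟩) (1 : k))) : G₁ = G₂ := by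
  refine GradedFunctor.ext hobj ?_
  rintro a b h ⟨⟩ ⟨⟩ r
  have map_eq_smul (G : GradedFunctor k χ (GradedCat.unit k WalkingArrow) 𝔞) :
      G.map h r = (show k from r) • G.map h (B := ⟨⟩) (B' := ⟨⟩) (1 : k) :=
    (congrArg (G.map h) (mul_one (show k from r)).symm).trans (G.map_smul h _ _)
  rw [map_eq_smul G₁, map_eq_smul G₂]
  refine 𝔞.smul_heq_smul rfl (hobj _ _) (hobj _ _) r ?_
  have map_id_heq (a : WalkingArrow) : HEq (G₁.map (𝟙 a) (B := ⟨⟩) (B' := ⟨⟩) (1 : k))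
      (G₂.map (𝟙 a) (B := ⟨⟩) (B' := ⟨⟩) (1 : k)) := by
    refine ((G₁.map_id ⟨⟩).trans ?_).trans (G₂.map_id ⟨⟩).symm
    rw [hobj]
  obtain ⟨_ | _⟩ := a <;> obtain ⟨_ | _⟩ := b
  case false.false | true.true => exact map_id_heq _
  case false.true => exact harrow
  case true.false => exact absurd (leOfHom h) (by decide)

end WalkingArrow

open WalkingArrow in
theorem CartesianWrtMas.subcartesian {φ : 𝒱 ⥤ 𝒰} {𝔟 : GradedCat k 𝒱} {𝔞 : GradedCat k 𝒰}
    {F : GradedFunctor k φ 𝔟 𝔞} (hF : CartesianWrtMas F) : F.Subcartesian := by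
  intro V V' f B B'
  obtain ⟨hinj, hsurj⟩ :=
    hF WalkingArrow (GradedCat.unit k _) (functorOfHom f)
      (fun a _ => objOf (χ := functorOfHom f) B B' a)
  constructor
  · intro x x' hxx
    refine gradedFunctorOf_injective (congrArg Subtype.val
      (hinj (a₁ := ⟨gradedFunctorOf x, fun _ _ => rfl⟩)
        (a₂ := ⟨gradedFunctorOf x', fun _ _ => rfl⟩)
        (Subtype.ext (gradedFunctor_ext (fun _ _ => rfl) ?_))))
    have h1 : F.map f ((1 : k) • x) = F.map f ((1 : k) • x') := by
      rw [one_smul, one_smul]; exact hxx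
    exact heq_of_eq h1
  · intro y
    obtain ⟨⟨G, hG⟩, hFG⟩ := hsurj
      ⟨gradedFunctorOf (χ := functorOfHom f ⋙ φ) (A := F.obj B) (A' := F.obj B') y,
        by rintro ⟨_ | _⟩ _ <;> rfl⟩
    refine ⟨𝔟.objCast (hG ⟨false⟩ ⟨⟩) (hG ⟨true⟩ ⟨⟩)
      (G.map arrow (B := ⟨⟩) (B' := ⟨⟩) (1 : k)), eq_of_heq ((F.map_objCast_heq _ _ _).trans ?_)⟩
    exact (congr_arg_heq (fun H => H.1.map arrow (B := ⟨⟩) (B' := ⟨⟩) (1 : k)) hFG).trans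
      (heq_of_eq (one_smul k y))

/-- A graded functor `(φ, F) : (𝒱, 𝔟) → (𝒰, 𝔞)` is cartesian with respect to the
forgetful functor `Ψ₁ : Map → Mas` if and only if every map
`𝔟_v(B, B') → 𝔞_{φ v}(F B, F B')` is an isomorphism of `k`-modules, i.e. iff `(φ, F)` is
subcartesian. -/
theorem statement7 {φ : 𝒱 ⥤ 𝒰} {𝔟 : GradedCat k 𝒱} {𝔞 : GradedCat k 𝒰}
    (F : GradedFunctor k φ 𝔟 𝔞) :
    CartesianWrtMas F ↔ F.Subcartesian :=
  ⟨CartesianWrtMas.subcartesian, GradedFunctor.Subcartesian.cartesianWrtMas⟩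

end MapGr
end

section
/- Let (φ_i : 𝒱_i → 𝒰)_{i∈I} be a family of functors between small categories that is jointly surjective on objects (a 0-cover). Write 𝒱_{ij} = 𝒱_i ×_𝒰 𝒱_j for the pairwise pullbacks with projections α_1, α_2, and similarly for triple pullbacks. Then: (a) for 𝒰-graded sets 𝔵, 𝔶, any family of graded-set morphisms F_i : 𝔶^{φ_i} → 𝔵^{φ_i} over the identity functors 1_{𝒱_i} satisfying (F_i)^{α_1} = (F_j)^{α_2} on every 𝒱_{ij} glues to a unique morphism F : 𝔶 → 𝔵 over 1_𝒰 with F^{φ_i} = F_i for all i; (b) every descent datum — a family of 𝒱_i-graded sets 𝔟_i together with isomorphisms ρ_{ij} : 𝔟_i^{α_1} ≅ 𝔟_j^{α_2} over 𝒱_{ij} satisfying the cocycle condition on triple pullbacks — is isomorphic to the descent datum (𝔵^{φ_i})_i of some 𝒰-graded set 𝔵. In other words, the fibered category Mas → Cat of map-graded sets is a stack for the pretopology of n-covers, for every n ≥ 0. -/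
/-!
Only the object maps of the functors matter: the family is a surjection
`q : (Σ i, 𝒱ᵢ) → Ob 𝒰`, a graded set over `𝒰` is a type family over `Ob 𝒰`, and a morphism over
`1_𝒰` is a dependent function. Along a surjection, data over `Ob 𝒰` are glued by choosing a
preimage of each object and taking the datum there; compatibility (for morphisms) or the cocycle
condition (for descent data) makes the result independent of the choice.
-/

open CategoryTheory

universe u

/-- Objects of the pullback `𝒱₁ ×_𝒰 𝒱₂` of two functors in the category of small
categories: pairs of objects with equal images in `𝒰`. -/
structure CatPB {𝒰 𝒱₁ 𝒱₂ : Type u} [SmallCategory 𝒰] [SmallCategory 𝒱₁]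
    [SmallCategory 𝒱₂] (φ₁ : 𝒱₁ ⥤ 𝒰) (φ₂ : 𝒱₂ ⥤ 𝒰) : Type u where
  left : 𝒱₁
  right : 𝒱₂
  eq : φ₁.obj left = φ₂.obj right

namespace Function.Surjective

open Function

universe v

variable {X Y : Type*} {q : X → Y}

theorem existsUnique_pi_of_heq (hq : Surjective q) {T : Y → Sort*} (F : ∀ x, T (q x))
    (hF : ∀ x x', q x = q x' → F x ≍ F x') :
    ∃! G : ∀ y, T y, ∀ x, G (q x) = F x := by
  refine ⟨fun y => cast (congrArg T (surjInv_eq hq y)) (F (surjInv hq y)), ?_, ?_⟩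
  · intro x
    exact eq_of_heq ((cast_heq _ _).trans (hF _ _ (surjInv_eq hq (q x))))
  · intro G hG
    funext y
    refine eq_of_heq ((congr_arg_heq G (surjInv_eq hq y).symm).trans ?_)
    rw [hG]
    exact (cast_heq _ _).symm

theorem exists_equiv_of_cocycle (hq : Surjective q) {𝔟 : X → Sort v}
    (ρ : ∀ x x', q x = q x' → 𝔟 x ≃ 𝔟 x')
    (hρ : ∀ x₁ x₂ x₃ (h₁₂ : q x₁ = q x₂) (h₂₃ : q x₂ = q x₃) (b : 𝔟 x₁),
      ρ x₂ x₃ h₂₃ (ρ x₁ x₂ h₁₂ b) = ρ x₁ x₃ (h₁₂.trans h₂₃) b) :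
    ∃ (𝔵 : Y → Sort v) (σ : ∀ x, 𝔟 x ≃ 𝔵 (q x)),
      ∀ x x' (h : q x = q x') (b : 𝔟 x), σ x' (ρ x x' h b) = cast (congrArg 𝔵 h) (σ x b) := by
  refine ⟨fun y => 𝔟 (surjInv hq y), fun x => ρ x _ (surjInv_eq hq (q x)).symm, ?_⟩
  intro x x' h b
  -- the value of `ρ x (surjInv hq y) _ b` depends on `y` only through the proof of `q x = y`
  have transport : ∀ y (e : q x = y),
      ρ x (surjInv hq y) (e.trans (surjInv_eq hq y).symm) b ≍
        ρ x (surjInv hq (q x)) (surjInv_eq hq (q x)).symm b := by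
    rintro _ rfl
    rfl
  rw [hρ, eq_cast_iff_heq]
  exact transport _ h

end Function.Surjective

theorem heq_of_cast_comp_eq {α : Sort*} {β γ : α → Sort*} {a b : α} (h : a = b)
    {f : β a → γ a} {g : β b → γ b}
    (hfg : ∀ y, cast (congrArg γ h) (f y) = g (cast (congrArg β h) y)) : f ≍ g := by
  subst h
  exact heq_of_eq (funext hfg)

/-- Let `(φᵢ : 𝒱ᵢ ⥤ 𝒰)` be a family of functors which is jointly surjective on objects
(a `0`-cover, hence the relevant condition for an `n`-cover for every `n ≥ 0`).  Then:
(a) a compatible family of morphisms of graded sets `Fᵢ : 𝔶^{φᵢ} → 𝔵^{φᵢ}` over the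
identity functors glues to a unique morphism `F : 𝔶 → 𝔵` over `1_𝒰`;
(b) every descent datum of graded sets — a family of `𝒱ᵢ`-graded sets `𝔟ᵢ` with
isomorphisms `ρᵢⱼ : 𝔟ᵢ^{α₁} ≅ 𝔟ⱼ^{α₂}` over the pairwise pullbacks satisfying the
cocycle condition on triple pullbacks — is isomorphic to the descent datum of
restrictions of some `𝒰`-graded set `𝔵`.
In other words, the fibered category `Mas → Cat` of map-graded sets is a stack for the
pretopology of `n`-covers, for every `n ≥ 0`. -/
theorem statement8 {ι : Type u} {𝒰 : Type u} [SmallCategory 𝒰] (𝒱 : ι → Type u)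
    [∀ i, SmallCategory (𝒱 i)] (φ : ∀ i, 𝒱 i ⥤ 𝒰)
    (hcov : ∀ U : 𝒰, ∃ i, ∃ V : 𝒱 i, (φ i).obj V = U) :
    -- (a) glueing of morphisms of graded sets
    (∀ (𝔵 𝔶 : 𝒰 → Type u)
      (F : ∀ (i : ι) (V : 𝒱 i), 𝔶 ((φ i).obj V) → 𝔵 ((φ i).obj V)),
      (∀ (i j : ι) (P : CatPB (φ i) (φ j)) (y : 𝔶 ((φ i).obj P.left)),
        cast (congrArg 𝔵 P.eq) (F i P.left y) = F j P.right (cast (congrArg 𝔶 P.eq) y)) →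
      ∃! G : ∀ U : 𝒰, 𝔶 U → 𝔵 U, ∀ (i : ι) (V : 𝒱 i), G ((φ i).obj V) = F i V) ∧
    -- (b) every descent datum of graded sets is effective
    (∀ (𝔟 : ∀ i : ι, 𝒱 i → Type u)
      (ρ : ∀ (i j : ι) (P : CatPB (φ i) (φ j)), 𝔟 i P.left ≃ 𝔟 j P.right),
      (∀ (i j l : ι) (V₁ : 𝒱 i) (V₂ : 𝒱 j) (V₃ : 𝒱 l)
        (h₁₂ : (φ i).obj V₁ = (φ j).obj V₂) (h₂₃ : (φ j).obj V₂ = (φ l).obj V₃)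
        (x : 𝔟 i V₁),
        ρ j l ⟨V₂, V₃, h₂₃⟩ (ρ i j ⟨V₁, V₂, h₁₂⟩ x) = ρ i l ⟨V₁, V₃, h₁₂.trans h₂₃⟩ x) →
      ∃ (𝔵 : 𝒰 → Type u) (σ : ∀ (i : ι) (V : 𝒱 i), 𝔟 i V ≃ 𝔵 ((φ i).obj V)),
        ∀ (i j : ι) (P : CatPB (φ i) (φ j)) (x : 𝔟 i P.left),
          σ j P.right (ρ i j P x) = cast (congrArg 𝔵 P.eq) (σ i P.left x)) := by
  have hq : Function.Surjective fun x : Σ i, 𝒱 i => (φ x.1).obj x.2 := fun U => by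
    obtain ⟨i, V, hV⟩ := hcov U
    exact ⟨⟨i, V⟩, hV⟩
  refine ⟨fun 𝔵 𝔶 F hF => ?_, fun 𝔟 ρ hρ => ?_⟩
  · have glue := hq.existsUnique_pi_of_heq (T := fun U => 𝔶 U → 𝔵 U) (fun x => F x.1 x.2)
      fun x x' h => heq_of_cast_comp_eq h (hF x.1 x'.1 ⟨x.2, x'.2, h⟩)
    simpa only [Sigma.forall] using glue
  · obtain ⟨𝔵, σ, hσ⟩ := hq.exists_equiv_of_cocycle (𝔟 := fun x => 𝔟 x.1 x.2)
      (fun x x' h => ρ x.1 x'.1 ⟨x.2, x'.2, h⟩) fun x₁ x₂ x₃ => hρ x₁.1 x₂.1 x₃.1 x₁.2 x₂.2 x₃.2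
    exact ⟨𝔵, fun i V => σ ⟨i, V⟩, fun i j P => hσ ⟨i, P.left⟩ ⟨j, P.right⟩ P.eq⟩
end

section
/- Fix n ∈ ℕ ∪ {∞} and endow the category of small categories with the pretopology of n-covers. For an n-cover (φ_i : 𝒱_i → 𝒰)_{i∈I}, consider the comparison functor sending a 𝒰-graded category 𝔞 to the descent datum of restrictions (𝔞^{φ_i})_i together with the canonical identifications over the pullbacks 𝒱_i ×_𝒰 𝒱_j. If n ≥ 2, this comparison functor is fully faithful for every n-cover (Map is a prestack over Cat); if n ≥ 3, it is an equivalence of categories for every n-cover (Map is a stack over Cat). -/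
open CategoryTheory

universe u

namespace MapGr

/-- Strings of `n` composable morphisms (the `n`-simplices of the simplicial nerve). -/
inductive Pth (C : Type u) [Category.{u} C] : ℕ → C → C → Type u
  | nil (X : C) : Pth C 0 X X
  | cons {n : ℕ} {X Y Z : C} (f : X ⟶ Y) (p : Pth C n Y Z) : Pth C (n + 1) X Z

/-- The map induced by a functor on simplices. -/
def Pth.map {C D : Type u} [Category.{u} C] [Category.{u} D] (F : C ⥤ D) :
    ∀ {n : ℕ} {X Y : C}, Pth C n X Y → Pth D n (F.obj X) (F.obj Y)
  | _, _, _, .nil X => .nil _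
  | _, _, _, .cons f p => .cons (F.map f) (p.map F)

/-- The set of `n`-simplices of the simplicial nerve of a category. -/
def NerveTot (C : Type u) [Category.{u} C] (m : ℕ) : Type u :=
  Σ (X : C) (Y : C), Pth C m X Y

/-- The map induced by a functor on the sets of `n`-simplices. -/
def NerveTot.map {C D : Type u} [Category.{u} C] [Category.{u} D] (F : C ⥤ D) {m : ℕ}
    (s : NerveTot C m) : NerveTot D m :=
  ⟨F.obj s.1, F.obj s.2.1, Pth.map F s.2.2⟩

variable {k : Type u} [CommRing k]
variable {𝒰 𝒱 𝒲 : Type u} [Category.{u} 𝒰] [Category.{u} 𝒱] [Category.{u} 𝒲]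

/-- Restriction, along a functor `ψ : 𝒲 ⥤ 𝒱`, of a graded functor over the identity of
`𝒱` (i.e. of a morphism in the fiber `Map(𝒱)`). -/
def restrictAlong (ψ : 𝒲 ⥤ 𝒱) {𝔟 𝔞 : GradedCat k 𝒱}
    (H : GradedFunctor k (𝟭 𝒱) 𝔟 𝔞) :
    GradedFunctor k (𝟭 𝒲) (𝔟.restrict ψ) (𝔞.restrict ψ) where
  obj B := H.obj B
  map := fun {W W'} f {B B'} x => H.map (ψ.map f) x
  map_add := by intro W W' f B B' x y; (try dsimp only); exact H.map_add _ x y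
  map_smul := by intro W W' f B B' r x; (try dsimp only); exact H.map_smul _ r x
  map_id := by
    intro W B
    try dsimp only
    refine ((H.map_congr (ψ.map_id W) (𝔟.Hcast_heq (ψ.map_id W).symm (𝔟.id B))).trans
      (H.map_id B)).trans ?_
    exact (𝔞.Hcast_heq (ψ.map_id W).symm (𝔞.id (H.obj B))).symm
  map_comp := by
    intro W W' W'' f g C B A x y
    try dsimp only
    refine ((H.map_congr (ψ.map_comp g f) (𝔟.Hcast_heq (ψ.map_comp g f).symm
      (𝔟.comp x y))).trans (H.map_comp x y)).trans ?_
    exact (𝔞.Hcast_heq (ψ.map_comp g f).symm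
      (𝔞.comp (H.map (ψ.map f) x) (H.map (ψ.map g) y))).symm

/-- Objects of the pullback `𝒱₁ ×_𝒰 𝒱₂` of two functors of small categories. -/
structure CatPB {𝒱₁ 𝒱₂ : Type u} [Category.{u} 𝒱₁] [Category.{u} 𝒱₂]
    (φ₁ : 𝒱₁ ⥤ 𝒰) (φ₂ : 𝒱₂ ⥤ 𝒰) : Type u where
  left : 𝒱₁
  right : 𝒱₂
  eq : φ₁.obj left = φ₂.obj right

instance {𝒱₁ 𝒱₂ : Type u} [Category.{u} 𝒱₁] [Category.{u} 𝒱₂] (φ₁ : 𝒱₁ ⥤ 𝒰)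
    (φ₂ : 𝒱₂ ⥤ 𝒰) : Category.{u} (CatPB φ₁ φ₂) where
  Hom A B := { fg : (A.left ⟶ B.left) × (A.right ⟶ B.right) //
    φ₁.map fg.1 = eqToHom A.eq ≫ φ₂.map fg.2 ≫ eqToHom B.eq.symm }
  id A := ⟨(𝟙 _, 𝟙 _), by simp⟩
  comp {A B C} f g := ⟨(f.1.1 ≫ g.1.1, f.1.2 ≫ g.1.2), by
    rw [Functor.map_comp, Functor.map_comp, f.2, g.2]; simp⟩
  id_comp f := by apply Subtype.ext; simp
  comp_id f := by apply Subtype.ext; simp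
  assoc f g h := by apply Subtype.ext; simp

/-- The first projection of the pullback of categories. -/
def pbFstF {𝒱₁ 𝒱₂ : Type u} [Category.{u} 𝒱₁] [Category.{u} 𝒱₂] (φ₁ : 𝒱₁ ⥤ 𝒰)
    (φ₂ : 𝒱₂ ⥤ 𝒰) : CatPB φ₁ φ₂ ⥤ 𝒱₁ where
  obj A := A.left
  map f := f.1.1
  map_id _ := rfl
  map_comp _ _ := rfl

/-- The second projection of the pullback of categories. -/
def pbSndF {𝒱₁ 𝒱₂ : Type u} [Category.{u} 𝒱₁] [Category.{u} 𝒱₂] (φ₁ : 𝒱₁ ⥤ 𝒰)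
    (φ₂ : 𝒱₂ ⥤ 𝒰) : CatPB φ₁ φ₂ ⥤ 𝒱₂ where
  obj A := A.right
  map f := f.1.2
  map_id _ := rfl
  map_comp _ _ := rfl

end MapGr

namespace MapGr

/-!
Fix a lift along the cover of every object, every morphism and every composable pair of `𝒰`
(this uses that the cover is a 2-cover); everything is computed in these charts.

Gluing morphisms: `G` is defined on an object, resp. a graded morphism over `f`, through the
chosen chart of `U`, resp. of `f`. Compatibility over the pullbacks `𝒱ᵢ ×_𝒰 𝒱ⱼ` says that any
other chart gives the same result, so a common chart of a composable pair (a lifted 2-simplex)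
shows that `G` preserves composition, and uniqueness holds because every graded morphism is seen
in some chart.

Descent: over `U` the descended category has the objects of `𝔟` in the chosen chart of `U`, and
over `f` the graded morphisms of `𝔟` over the chosen lift of `f`. Since the `ρᵢⱼ` are
bijective and satisfy the cocycle condition, transport between two lifts of the same morphism is
coherent and bijective, so composition can be computed in the chart of a lifted 2-simplex.
Associativity needs a common chart of three composable morphisms: this is where 3-covers enter.
-/

section

variable {k : Type u} [CommRing k] {𝒰 : Type u} [Category.{u} 𝒰]

namespace GradedCat

variable (𝔞 : GradedCat k 𝒰)

def castObj {X Y : 𝒰} (h : X = Y) (B : 𝔞.Obj X) : 𝔞.Obj Y := h ▸ B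

theorem castObj_heq {X Y : 𝒰} (h : X = Y) (B : 𝔞.Obj X) : HEq (𝔞.castObj h B) B := by
  subst h; rfl

theorem hom_congr {X₁ Y₁ X₂ Y₂ : 𝒰} (hX : X₁ = X₂) (hY : Y₁ = Y₂) {f₁ : X₁ ⟶ Y₁}
    {f₂ : X₂ ⟶ Y₂} (hf : HEq f₁ f₂) {B₁ : 𝔞.Obj X₁} {B₂ : 𝔞.Obj X₂} {A₁ : 𝔞.Obj Y₁}
    {A₂ : 𝔞.Obj Y₂} (hB : HEq B₁ B₂) (hA : HEq A₁ A₂) :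
    𝔞.Hom f₁ B₁ A₁ = 𝔞.Hom f₂ B₂ A₂ := by
  subst hX hY; cases hf; cases hB; cases hA; rfl

def castHom {X₁ Y₁ X₂ Y₂ : 𝒰} (hX : X₁ = X₂) (hY : Y₁ = Y₂) {f₁ : X₁ ⟶ Y₁}
    {f₂ : X₂ ⟶ Y₂} (hf : HEq f₁ f₂) {B₁ : 𝔞.Obj X₁} {B₂ : 𝔞.Obj X₂} {A₁ : 𝔞.Obj Y₁}
    {A₂ : 𝔞.Obj Y₂} (hB : HEq B₁ B₂) (hA : HEq A₁ A₂) (x : 𝔞.Hom f₁ B₁ A₁) :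
    𝔞.Hom f₂ B₂ A₂ :=
  cast (congrArg (fun M : ModuleCat.{u} k => (M : Type u)) (𝔞.hom_congr hX hY hf hB hA)) x

section castHom

variable {X₁ Y₁ X₂ Y₂ : 𝒰} (hX : X₁ = X₂) (hY : Y₁ = Y₂) {f₁ : X₁ ⟶ Y₁} {f₂ : X₂ ⟶ Y₂}
  (hf : HEq f₁ f₂) {B₁ : 𝔞.Obj X₁} {B₂ : 𝔞.Obj X₂} {A₁ : 𝔞.Obj Y₁} {A₂ : 𝔞.Obj Y₂}
  (hB : HEq B₁ B₂) (hA : HEq A₁ A₂)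

theorem castHom_heq (x : 𝔞.Hom f₁ B₁ A₁) : HEq (𝔞.castHom hX hY hf hB hA x) x :=
  cast_heq _ _

theorem castHom_bijective : Function.Bijective (𝔞.castHom hX hY hf hB hA) := by
  subst hX hY; cases hf; cases hB; cases hA
  exact Function.bijective_id

theorem castHom_add (x y : 𝔞.Hom f₁ B₁ A₁) :
    𝔞.castHom hX hY hf hB hA (x + y) = 𝔞.castHom hX hY hf hB hA x + 𝔞.castHom hX hY hf hB hA y := by
  subst hX hY; cases hf; cases hB; cases hA; rfl

theorem castHom_smul (r : k) (x : 𝔞.Hom f₁ B₁ A₁) :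
    𝔞.castHom hX hY hf hB hA (r • x) = r • 𝔞.castHom hX hY hf hB hA x := by
  subst hX hY; cases hf; cases hB; cases hA; rfl

end castHom

theorem id_heq_id {X₁ X₂ : 𝒰} (hX : X₁ = X₂) {A₁ : 𝔞.Obj X₁} {A₂ : 𝔞.Obj X₂}
    (hA : HEq A₁ A₂) : HEq (𝔞.id A₁) (𝔞.id A₂) := by
  subst hX; cases hA; rfl

theorem comp_heq_comp_s10 {X₁ Y₁ Z₁ X₂ Y₂ Z₂ : 𝒰} (hX : X₁ = X₂) (hY : Y₁ = Y₂)
    (hZ : Z₁ = Z₂) {f₁ : Y₁ ⟶ Z₁} {f₂ : Y₂ ⟶ Z₂} {g₁ : X₁ ⟶ Y₁} {g₂ : X₂ ⟶ Y₂}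
    (hf : HEq f₁ f₂) (hg : HEq g₁ g₂) {C₁ : 𝔞.Obj X₁} {C₂ : 𝔞.Obj X₂}
    {B₁ : 𝔞.Obj Y₁} {B₂ : 𝔞.Obj Y₂} {A₁ : 𝔞.Obj Z₁} {A₂ : 𝔞.Obj Z₂}
    (hC : HEq C₁ C₂) (hB : HEq B₁ B₂) (hA : HEq A₁ A₂)
    {x₁ : 𝔞.Hom f₁ B₁ A₁} {x₂ : 𝔞.Hom f₂ B₂ A₂} {y₁ : 𝔞.Hom g₁ C₁ B₁}
    {y₂ : 𝔞.Hom g₂ C₂ B₂} (hx : HEq x₁ x₂) (hy : HEq y₁ y₂) :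
    HEq (𝔞.comp x₁ y₁) (𝔞.comp x₂ y₂) := by
  subst hX hY hZ; cases hf; cases hg; cases hC; cases hB; cases hA; cases hx; cases hy; rfl

end GradedCat

namespace GradedFunctor

variable {𝒱 : Type u} [Category.{u} 𝒱] {φ : 𝒱 ⥤ 𝒰} {𝔟 : GradedCat k 𝒱}
  {𝔞 : GradedCat k 𝒰} (F : GradedFunctor k φ 𝔟 𝔞)

theorem obj_heq_obj {V₁ V₂ : 𝒱} (hV : V₁ = V₂) {B₁ : 𝔟.Obj V₁} {B₂ : 𝔟.Obj V₂}
    (hB : HEq B₁ B₂) : HEq (F.obj B₁) (F.obj B₂) := by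
  subst hV; cases hB; rfl

theorem map_heq_map {V₁ V₁' V₂ V₂' : 𝒱} (hV : V₁ = V₂) (hV' : V₁' = V₂')
    {f₁ : V₁ ⟶ V₁'} {f₂ : V₂ ⟶ V₂'} (hf : HEq f₁ f₂) {B₁ : 𝔟.Obj V₁} {B₂ : 𝔟.Obj V₂}
    {A₁ : 𝔟.Obj V₁'} {A₂ : 𝔟.Obj V₂'} (hB : HEq B₁ B₂) (hA : HEq A₁ A₂)
    {x₁ : 𝔟.Hom f₁ B₁ A₁} {x₂ : 𝔟.Hom f₂ B₂ A₂} (hx : HEq x₁ x₂) :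
    HEq (F.map f₁ x₁) (F.map f₂ x₂) := by
  subst hV hV'; cases hf; cases hB; cases hA; cases hx; rfl

theorem ext_heq {F G : GradedFunctor k φ 𝔟 𝔞}
    (hobj : ∀ (V : 𝒱) (B : 𝔟.Obj V), F.obj B = G.obj B)
    (hmap : ∀ (V V' : 𝒱) (f : V ⟶ V') (B : 𝔟.Obj V) (B' : 𝔟.Obj V')
      (x : 𝔟.Hom f B B'), HEq (F.map f x) (G.map f x)) : F = G := by
  cases F with | mk Fo Fm =>
  cases G with | mk Go Gm =>
  obtain rfl : @Fo = @Go := by funext V B; exact hobj V B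
  obtain rfl : @Fm = @Gm := by funext V V' f B B' x; exact eq_of_heq (hmap V V' f B B' x)
  rfl

end GradedFunctor

def CatPB.homMk {𝒱₁ 𝒱₂ : Type u} [Category.{u} 𝒱₁] [Category.{u} 𝒱₂] {φ₁ : 𝒱₁ ⥤ 𝒰}
    {φ₂ : 𝒱₂ ⥤ 𝒰} {P Q : CatPB φ₁ φ₂} (v : P.left ⟶ Q.left) (w : P.right ⟶ Q.right)
    (h : HEq (φ₁.map v) (φ₂.map w)) : P ⟶ Q :=
  ⟨(v, w), (conj_eqToHom_iff_heq _ _ P.eq Q.eq).2 h⟩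

section Lifts

variable {ι : Type u} {𝒱 : ι → Type u} [∀ i, Category.{u} (𝒱 i)]

def CoversSimplices (φ : ∀ i, 𝒱 i ⥤ 𝒰) (m : ℕ) : Prop :=
  ∀ s : NerveTot 𝒰 m, ∃ i, ∃ t : NerveTot (𝒱 i) m, NerveTot.map (φ i) t = s

structure ObjLift (φ : ∀ i, 𝒱 i ⥤ 𝒰) (U : 𝒰) : Type u where
  i : ι
  V : 𝒱 i
  e : (φ i).obj V = U

structure HomLift (φ : ∀ i, 𝒱 i ⥤ 𝒰) {U U' : 𝒰} (f : U ⟶ U') : Type u where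
  i : ι
  V : 𝒱 i
  V' : 𝒱 i
  v : V ⟶ V'
  e : (φ i).obj V = U
  e' : (φ i).obj V' = U'
  hv : HEq ((φ i).map v) f

structure CompLift (φ : ∀ i, 𝒱 i ⥤ 𝒰) {U U' U'' : 𝒰} (g : U ⟶ U') (f : U' ⟶ U'') :
    Type u where
  i : ι
  V : 𝒱 i
  V' : 𝒱 i
  V'' : 𝒱 i
  v : V ⟶ V'
  v' : V' ⟶ V''
  e : (φ i).obj V = U
  e' : (φ i).obj V' = U'
  e'' : (φ i).obj V'' = U''
  hv : HEq ((φ i).map v) g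
  hv' : HEq ((φ i).map v') f

structure LiftChoice (φ : ∀ i, 𝒱 i ⥤ 𝒰) : Type u where
  obj : ∀ U : 𝒰, ObjLift φ U
  hom : ∀ {U U' : 𝒰} (f : U ⟶ U'), HomLift φ f
  comp : ∀ {U U' U'' : 𝒰} (g : U ⟶ U') (f : U' ⟶ U''), CompLift φ g f

variable {φ : ∀ i, 𝒱 i ⥤ 𝒰} {U U' U'' : 𝒰}

def HomLift.ofMap (i : ι) {V V' : 𝒱 i} (v : V ⟶ V') : HomLift φ ((φ i).map v) :=
  ⟨i, V, V', v, rfl, rfl, HEq.rfl⟩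

def HomLift.id (i : ι) (V : 𝒱 i) (e : (φ i).obj V = U) : HomLift φ (𝟙 U) :=
  ⟨i, V, V, 𝟙 V, e, e, by rw [(φ i).map_id]; subst e; rfl⟩

namespace CompLift

variable {g : U ⟶ U'} {f : U' ⟶ U''}

def fst (P : CompLift φ g f) : HomLift φ g := ⟨P.i, P.V, P.V', P.v, P.e, P.e', P.hv⟩

def snd (P : CompLift φ g f) : HomLift φ f := ⟨P.i, P.V', P.V'', P.v', P.e', P.e'', P.hv'⟩

def comp (P : CompLift φ g f) : HomLift φ (g ≫ f) :=
  ⟨P.i, P.V, P.V'', P.v ≫ P.v', P.e, P.e'', by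
    rw [(φ P.i).map_comp]; exact heq_comp P.e P.e' P.e'' P.hv P.hv'⟩

def idLeft (L : HomLift φ f) : CompLift φ (𝟙 U') f :=
  ⟨L.i, L.V, L.V, L.V', 𝟙 L.V, L.v, L.e, L.e, L.e', (HomLift.id L.i L.V L.e).hv, L.hv⟩

def idRight (L : HomLift φ g) : CompLift φ g (𝟙 U') :=
  ⟨L.i, L.V, L.V', L.V', L.v, 𝟙 L.V', L.e, L.e', L.e', L.hv, (HomLift.id L.i L.V' L.e').hv⟩

end CompLift

namespace CoversSimplices

theorem nonempty_objLift (h : CoversSimplices φ 0) (U : 𝒰) : Nonempty (ObjLift φ U) := by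
  obtain ⟨i, ⟨V, _, _⟩, ht⟩ := h ⟨U, U, .nil U⟩
  exact ⟨⟨i, V, congrArg Sigma.fst ht⟩⟩

theorem nonempty_homLift (h : CoversSimplices φ 1) (f : U ⟶ U') : Nonempty (HomLift φ f) := by
  obtain ⟨i, ⟨V, V', _ | ⟨v, _ | _⟩⟩, ht⟩ := h ⟨U, U', .cons f (.nil U')⟩
  obtain ⟨rfl, ht⟩ := Sigma.mk.inj ht
  obtain ⟨rfl, ht⟩ := Sigma.mk.inj (eq_of_heq ht)
  cases eq_of_heq ht
  exact ⟨⟨i, V, V', v, rfl, rfl, HEq.rfl⟩⟩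

theorem nonempty_compLift (h : CoversSimplices φ 2) (g : U ⟶ U') (f : U' ⟶ U'') :
    Nonempty (CompLift φ g f) := by
  obtain ⟨i, ⟨V, V'', _ | ⟨v, _ | ⟨v', _ | _⟩⟩⟩, ht⟩ := h ⟨U, U'', .cons g (.cons f (.nil U''))⟩
  obtain ⟨rfl, ht⟩ := Sigma.mk.inj ht
  obtain ⟨rfl, ht⟩ := Sigma.mk.inj (eq_of_heq ht)
  cases eq_of_heq ht
  exact ⟨⟨i, V, _, V'', v, v', rfl, rfl, rfl, HEq.rfl, HEq.rfl⟩⟩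

theorem exists_common_lift₃ {U₀ U₁ U₂ U₃ : 𝒰} (h : CoversSimplices φ 3) (f₁ : U₀ ⟶ U₁)
    (f₂ : U₁ ⟶ U₂) (f₃ : U₂ ⟶ U₃) :
    ∃ i, ∃ V₀ V₁ V₂ V₃ : 𝒱 i, ∃ v₁ : V₀ ⟶ V₁, ∃ v₂ : V₁ ⟶ V₂, ∃ v₃ : V₂ ⟶ V₃,
      ∃ _ : (φ i).obj V₀ = U₀, ∃ _ : (φ i).obj V₁ = U₁, ∃ _ : (φ i).obj V₂ = U₂,
      ∃ _ : (φ i).obj V₃ = U₃,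
      HEq ((φ i).map v₁) f₁ ∧ HEq ((φ i).map v₂) f₂ ∧ HEq ((φ i).map v₃) f₃ := by
  obtain ⟨i, ⟨V₀, V₃, _ | ⟨v₁, _ | ⟨v₂, _ | ⟨v₃, _ | _⟩⟩⟩⟩, ht⟩ :=
    h ⟨U₀, U₃, .cons f₁ (.cons f₂ (.cons f₃ (.nil U₃)))⟩
  obtain ⟨rfl, ht⟩ := Sigma.mk.inj ht
  obtain ⟨rfl, ht⟩ := Sigma.mk.inj (eq_of_heq ht)
  cases eq_of_heq ht
  exact ⟨i, _, _, _, _, v₁, v₂, v₃, rfl, rfl, rfl, rfl, HEq.rfl, HEq.rfl, HEq.rfl⟩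

end CoversSimplices

noncomputable def LiftChoice.ofCovers (h : ∀ m ≤ 2, CoversSimplices φ m) : LiftChoice φ where
  obj U := ((h 0 (by omega)).nonempty_objLift U).some
  hom f := ((h 1 (by omega)).nonempty_homLift f).some
  comp g f := ((h 2 le_rfl).nonempty_compLift g f).some

end Lifts

section Glue

variable {ι : Type u} {𝒱 : ι → Type u} [∀ i, Category.{u} (𝒱 i)] {φ : ∀ i, 𝒱 i ⥤ 𝒰}
  {𝔟 𝔞 : GradedCat k 𝒰}

structure IsCompatible
    (H : ∀ i, GradedFunctor k (𝟭 (𝒱 i)) (𝔟.restrict (φ i)) (𝔞.restrict (φ i))) : Prop where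
  obj : ∀ (i j : ι) (P : CatPB (φ i) (φ j)) (B₁ : 𝔟.Obj ((φ i).obj P.left))
    (B₂ : 𝔟.Obj ((φ j).obj P.right)), HEq B₁ B₂ →
    HEq ((H i).obj (V := P.left) B₁) ((H j).obj (V := P.right) B₂)
  map : ∀ (i j : ι) (P Q : CatPB (φ i) (φ j)) (f : P ⟶ Q)
    (B₁ : 𝔟.Obj ((φ i).obj P.left)) (B₁' : 𝔟.Obj ((φ i).obj Q.left))
    (B₂ : 𝔟.Obj ((φ j).obj P.right)) (B₂' : 𝔟.Obj ((φ j).obj Q.right))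
    (x : 𝔟.Hom ((φ i).map f.1.1) B₁ B₁') (y : 𝔟.Hom ((φ j).map f.1.2) B₂ B₂'),
    HEq B₁ B₂ → HEq B₁' B₂' → HEq x y → HEq ((H i).map f.1.1 x) ((H j).map f.1.2 y)

variable (χ : LiftChoice φ)
  {H : ∀ i, GradedFunctor k (𝟭 (𝒱 i)) (𝔟.restrict (φ i)) (𝔞.restrict (φ i))}

variable (H) in
def glueObj {U : 𝒰} (B : 𝔟.Obj U) : 𝔞.Obj U :=
  𝔞.castObj (χ.obj U).e ((H (χ.obj U).i).obj (𝔟.castObj (χ.obj U).e.symm B))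

variable (hH : IsCompatible H)
include hH

theorem obj_heq_glueObj {U : 𝒰} (B : 𝔟.Obj U) (i : ι) (V : 𝒱 i) (e : (φ i).obj V = U)
    (B₁ : 𝔟.Obj ((φ i).obj V)) (hB : HEq B₁ B) :
    HEq ((H i).obj (V := V) B₁) (glueObj χ H B) :=
  (hH.obj i (χ.obj U).i ⟨V, (χ.obj U).V, e.trans (χ.obj U).e.symm⟩ B₁ _
    (hB.trans (𝔟.castObj_heq _ _).symm)).trans (𝔞.castObj_heq _ _).symm

def glueMap {U U' : 𝒰} (f : U ⟶ U') {B : 𝔟.Obj U} {B' : 𝔟.Obj U'} (x : 𝔟.Hom f B B') :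
    𝔞.Hom f (glueObj χ H B) (glueObj χ H B') :=
  𝔞.castHom (f₁ := (φ (χ.hom f).i).map (χ.hom f).v)
    (B₁ := ((H (χ.hom f).i).obj (𝔟.castObj (χ.hom f).e.symm B) :
      𝔞.Obj ((φ (χ.hom f).i).obj (χ.hom f).V)))
    (A₁ := ((H (χ.hom f).i).obj (𝔟.castObj (χ.hom f).e'.symm B') :
      𝔞.Obj ((φ (χ.hom f).i).obj (χ.hom f).V')))
    (χ.hom f).e (χ.hom f).e' (χ.hom f).hv
    (obj_heq_glueObj χ hH B _ _ (χ.hom f).e _ (𝔟.castObj_heq _ _))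
    (obj_heq_glueObj χ hH B' _ _ (χ.hom f).e' _ (𝔟.castObj_heq _ _))
    ((H (χ.hom f).i).map (χ.hom f).v
      (𝔟.castHom (χ.hom f).e.symm (χ.hom f).e'.symm (χ.hom f).hv.symm
        (𝔟.castObj_heq _ _).symm (𝔟.castObj_heq _ _).symm x))

theorem map_heq_glueMap {U U' : 𝒰} (f : U ⟶ U') {B : 𝔟.Obj U} {B' : 𝔟.Obj U'}
    (x : 𝔟.Hom f B B') (i : ι) (V V' : 𝒱 i) (v : V ⟶ V') (e : (φ i).obj V = U)
    (e' : (φ i).obj V' = U') (hv : HEq ((φ i).map v) f) (B₁ : 𝔟.Obj ((φ i).obj V))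
    (B₁' : 𝔟.Obj ((φ i).obj V')) (hB : HEq B₁ B) (hB' : HEq B₁' B')
    (x₁ : 𝔟.Hom ((φ i).map v) B₁ B₁') (hx : HEq x₁ x) :
    HEq ((H i).map (V := V) (V' := V') v x₁) (glueMap χ hH f x) := by
  refine (hH.map i (χ.hom f).i ⟨V, _, e.trans (χ.hom f).e.symm⟩ ⟨V', _, e'.trans (χ.hom f).e'.symm⟩
    (CatPB.homMk v (χ.hom f).v (hv.trans (χ.hom f).hv.symm)) B₁ B₁' _ _ x₁ _
    (hB.trans (𝔟.castObj_heq _ _).symm) (hB'.trans (𝔟.castObj_heq _ _).symm)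
    (hx.trans (𝔟.castHom_heq _ _ _ _ _ _).symm)).trans (𝔞.castHom_heq _ _ _ _ _ _).symm

theorem glueMap_id {U : 𝒰} (B : 𝔟.Obj U) :
    HEq (glueMap χ hH (𝟙 U) (𝔟.id B)) (𝔞.id (glueObj χ H B)) := by
  obtain ⟨i, V, e⟩ := χ.obj U
  have hx : HEq ((𝔟.restrict (φ i)).id (𝔟.castObj e.symm B)) (𝔟.id B) :=
    (𝔟.Hcast_heq ((φ i).map_id V).symm _).trans (𝔟.id_heq_id e (𝔟.castObj_heq e.symm B))
  refine (map_heq_glueMap χ hH (𝟙 U) (𝔟.id B) i V V (𝟙 V) e e (HomLift.id i V e).hv _ _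
    (𝔟.castObj_heq _ _) (𝔟.castObj_heq _ _) _ hx).symm.trans ?_
  exact ((H i).map_id _).trans ((𝔞.Hcast_heq ((φ i).map_id V).symm _).trans (𝔞.id_heq_id e
    (obj_heq_glueObj χ hH B _ _ e _ (𝔟.castObj_heq _ _))))

theorem glueMap_comp {U U' U'' : 𝒰} {f : U' ⟶ U''} {g : U ⟶ U'} {C : 𝔟.Obj U}
    {B : 𝔟.Obj U'} {A : 𝔟.Obj U''} (x : 𝔟.Hom f B A) (y : 𝔟.Hom g C B) :
    HEq (glueMap χ hH (g ≫ f) (𝔟.comp x y))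
      (𝔞.comp (glueMap χ hH f x) (glueMap χ hH g y)) := by
  obtain ⟨i, V, V', V'', v, v', e, e', e'', hv, hv'⟩ := χ.comp g f
  have hx := 𝔟.castHom_heq e'.symm e''.symm hv'.symm (𝔟.castObj_heq e'.symm B).symm
    (𝔟.castObj_heq e''.symm A).symm x
  have hy := 𝔟.castHom_heq e.symm e'.symm hv.symm (𝔟.castObj_heq e.symm C).symm
    (𝔟.castObj_heq e'.symm B).symm y
  have hxy : HEq ((𝔟.restrict (φ i)).comp _ _) (𝔟.comp x y) :=
    (𝔟.Hcast_heq ((φ i).map_comp v v').symm _).trans (𝔟.comp_heq_comp_s10 e e' e'' hv' hv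
      (𝔟.castObj_heq _ C) (𝔟.castObj_heq _ B) (𝔟.castObj_heq _ A) hx hy)
  have hvv' : HEq ((φ i).map (v ≫ v')) (g ≫ f) := by
    rw [(φ i).map_comp]; exact heq_comp e e' e'' hv hv'
  refine (map_heq_glueMap χ hH (g ≫ f) _ i V V'' (v ≫ v') e e'' hvv' _ _
    (𝔟.castObj_heq _ _) (𝔟.castObj_heq _ _) _ hxy).symm.trans ?_
  refine ((H i).map_comp _ _).trans ((𝔞.Hcast_heq ((φ i).map_comp v v').symm _).trans ?_)
  exact 𝔞.comp_heq_comp_s10 e e' e'' hv' hv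
    (obj_heq_glueObj χ hH C i V e _ (𝔟.castObj_heq _ _))
    (obj_heq_glueObj χ hH B i V' e' _ (𝔟.castObj_heq _ _))
    (obj_heq_glueObj χ hH A i V'' e'' _ (𝔟.castObj_heq _ _))
    (map_heq_glueMap χ hH f x i V' V'' v' e' e'' hv' _ _ (𝔟.castObj_heq _ _)
      (𝔟.castObj_heq _ _) _ hx)
    (map_heq_glueMap χ hH g y i V V' v e e' hv _ _ (𝔟.castObj_heq _ _)
      (𝔟.castObj_heq _ _) _ hy)

def glue : GradedFunctor k (𝟭 𝒰) 𝔟 𝔞 where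
  obj := glueObj χ H
  map f _ _ x := glueMap χ hH f x
  map_add f B B' x y := by
    dsimp only [glueMap]
    erw [𝔟.castHom_add, (H (χ.hom f).i).map_add, 𝔞.castHom_add]
  map_smul f B B' r x := by
    dsimp only [glueMap]
    erw [𝔟.castHom_smul, (H (χ.hom f).i).map_smul, 𝔞.castHom_smul]
  map_id := glueMap_id χ hH
  map_comp := glueMap_comp χ hH

theorem restrictAlong_glue (i : ι) : restrictAlong (φ i) (glue χ hH) = H i := by
  refine GradedFunctor.ext_heq (fun V B => ?_) (fun V V' f B B' x => ?_)
  · exact (eq_of_heq (obj_heq_glueObj χ hH B i V rfl B HEq.rfl)).symm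
  · exact (map_heq_glueMap χ hH ((φ i).map f) x i V V' f rfl rfl HEq.rfl
      B B' HEq.rfl HEq.rfl x HEq.rfl).symm

theorem eq_glue (G : GradedFunctor k (𝟭 𝒰) 𝔟 𝔞)
    (hG : ∀ i, restrictAlong (φ i) G = H i) : G = glue χ hH := by
  refine GradedFunctor.ext_heq (fun U B => ?_) (fun U U' f B B' x => ?_)
  · obtain ⟨i, V, e⟩ := χ.obj U
    refine eq_of_heq (((G.obj_heq_obj e.symm (𝔟.castObj_heq e.symm B).symm).trans
      (heq_of_eq ?_)).trans (obj_heq_glueObj χ hH B i V e _ (𝔟.castObj_heq e.symm B)))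
    exact congrArg (fun F => F.obj (V := V) (𝔟.castObj e.symm B)) (hG i)
  · obtain ⟨i, V, V', v, e, e', hv⟩ := χ.hom f
    have hx := 𝔟.castHom_heq e.symm e'.symm hv.symm (𝔟.castObj_heq e.symm B).symm
      (𝔟.castObj_heq e'.symm B').symm x
    refine HEq.trans ?_ (map_heq_glueMap χ hH f x i V V' v e e' hv _ _ (𝔟.castObj_heq _ _)
      (𝔟.castObj_heq _ _) _ hx)
    rw [← hG i]
    exact G.map_heq_map e.symm e'.symm hv.symm (𝔟.castObj_heq _ _).symm
      (𝔟.castObj_heq _ _).symm hx.symm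

theorem existsUnique_glue (h : ∀ m ≤ 2, CoversSimplices φ m) :
    ∃! G : GradedFunctor k (𝟭 𝒰) 𝔟 𝔞, ∀ i, restrictAlong (φ i) G = H i :=
  let χ := LiftChoice.ofCovers h
  ⟨glue χ hH, restrictAlong_glue χ hH, eq_glue χ hH⟩

end Glue

section Descent

variable {ι : Type u} {𝒱 : ι → Type u} [∀ i, Category.{u} (𝒱 i)]

variable (k) in
structure DescentDatum (φ : ∀ i, 𝒱 i ⥤ 𝒰) : Type (u + 1) where
  cat : ∀ i, GradedCat k (𝒱 i)
  iso : ∀ i j, GradedFunctor k (𝟭 (CatPB (φ i) (φ j)))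
    ((cat i).restrict (pbFstF (φ i) (φ j))) ((cat j).restrict (pbSndF (φ i) (φ j)))
  obj_bijective : ∀ i j (P : CatPB (φ i) (φ j)),
    Function.Bijective fun B : (cat i).Obj P.left => (iso i j).obj (V := P) B
  subcartesian : ∀ i j, (iso i j).Subcartesian
  obj_cocycle : ∀ (i j l : ι) (V₁ : 𝒱 i) (V₂ : 𝒱 j) (V₃ : 𝒱 l)
    (h₁₂ : (φ i).obj V₁ = (φ j).obj V₂) (h₂₃ : (φ j).obj V₂ = (φ l).obj V₃)
    (B : (cat i).Obj V₁),
    (iso j l).obj (V := ⟨V₂, V₃, h₂₃⟩) ((iso i j).obj (V := ⟨V₁, V₂, h₁₂⟩) B) =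
      (iso i l).obj (V := ⟨V₁, V₃, h₁₂.trans h₂₃⟩) B
  map_cocycle : ∀ (i j l : ι) (V₁ V₁' : 𝒱 i) (V₂ V₂' : 𝒱 j) (V₃ V₃' : 𝒱 l)
    (h₁₂ : (φ i).obj V₁ = (φ j).obj V₂) (h₂₃ : (φ j).obj V₂ = (φ l).obj V₃)
    (h₁₂' : (φ i).obj V₁' = (φ j).obj V₂') (h₂₃' : (φ j).obj V₂' = (φ l).obj V₃')
    (v₁ : V₁ ⟶ V₁') (v₂ : V₂ ⟶ V₂') (v₃ : V₃ ⟶ V₃')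
    (c₁₂ : (φ i).map v₁ = eqToHom h₁₂ ≫ (φ j).map v₂ ≫ eqToHom h₁₂'.symm)
    (c₂₃ : (φ j).map v₂ = eqToHom h₂₃ ≫ (φ l).map v₃ ≫ eqToHom h₂₃'.symm)
    (c₁₃ : (φ i).map v₁ = eqToHom (h₁₂.trans h₂₃) ≫ (φ l).map v₃ ≫
      eqToHom ((h₁₂'.trans h₂₃').symm))
    (B : (cat i).Obj V₁) (B' : (cat i).Obj V₁') (x : (cat i).Hom v₁ B B'),
    HEq ((iso j l).map (V := ⟨V₂, V₃, h₂₃⟩) (V' := ⟨V₂', V₃', h₂₃'⟩)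
        (⟨(v₂, v₃), c₂₃⟩ : (⟨V₂, V₃, h₂₃⟩ : CatPB (φ j) (φ l)) ⟶ ⟨V₂', V₃', h₂₃'⟩)
        ((iso i j).map (V := ⟨V₁, V₂, h₁₂⟩) (V' := ⟨V₁', V₂', h₁₂'⟩)
          (⟨(v₁, v₂), c₁₂⟩ : (⟨V₁, V₂, h₁₂⟩ : CatPB (φ i) (φ j)) ⟶ ⟨V₁', V₂', h₁₂'⟩)
          x))
      ((iso i l).map (V := ⟨V₁, V₃, h₁₂.trans h₂₃⟩) (V' := ⟨V₁', V₃', h₁₂'.trans h₂₃'⟩)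
        (⟨(v₁, v₃), c₁₃⟩ :
          (⟨V₁, V₃, h₁₂.trans h₂₃⟩ : CatPB (φ i) (φ l)) ⟶ ⟨V₁', V₃', h₁₂'.trans h₂₃'⟩)
        x)

namespace DescentDatum

variable {φ : ∀ i, 𝒱 i ⥤ 𝒰} (D : DescentDatum k φ)

def trObj (i j : ι) {V : 𝒱 i} {W : 𝒱 j} (e : (φ i).obj V = (φ j).obj W)
    (B : (D.cat i).Obj V) : (D.cat j).Obj W :=
  (D.iso i j).obj (V := ⟨V, W, e⟩) B

def trMap (i j : ι) {V V' : 𝒱 i} {W W' : 𝒱 j} (e : (φ i).obj V = (φ j).obj W)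
    (e' : (φ i).obj V' = (φ j).obj W') (v : V ⟶ V') (w : W ⟶ W')
    (h : HEq ((φ i).map v) ((φ j).map w)) {B : (D.cat i).Obj V} {B' : (D.cat i).Obj V'}
    (x : (D.cat i).Hom v B B') : (D.cat j).Hom w (D.trObj i j e B) (D.trObj i j e' B') :=
  (D.iso i j).map (V := ⟨V, W, e⟩) (V' := ⟨V', W', e'⟩) (CatPB.homMk v w h) x

theorem trObj_trObj (i j l : ι) {V : 𝒱 i} {W : 𝒱 j} {X : 𝒱 l}
    (e₁ : (φ i).obj V = (φ j).obj W) (e₂ : (φ j).obj W = (φ l).obj X) (B : (D.cat i).Obj V) :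
    D.trObj j l e₂ (D.trObj i j e₁ B) = D.trObj i l (e₁.trans e₂) B :=
  D.obj_cocycle i j l V W X e₁ e₂ B

theorem trObj_bijective (i j : ι) {V : 𝒱 i} {W : 𝒱 j} (e : (φ i).obj V = (φ j).obj W) :
    Function.Bijective (D.trObj i j e) :=
  D.obj_bijective i j ⟨V, W, e⟩

/-- The cocycle condition makes `trObj i i e` idempotent, hence the identity. -/
theorem trObj_self (i : ι) {V : 𝒱 i} (e : (φ i).obj V = (φ i).obj V) (B : (D.cat i).Obj V) :
    D.trObj i i e B = B :=
  (D.trObj_bijective i i e).injective (D.trObj_trObj i i i e e B)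

theorem trMap_bijective (i j : ι) {V V' : 𝒱 i} {W W' : 𝒱 j} (e : (φ i).obj V = (φ j).obj W)
    (e' : (φ i).obj V' = (φ j).obj W') (v : V ⟶ V') (w : W ⟶ W')
    (h : HEq ((φ i).map v) ((φ j).map w)) (B : (D.cat i).Obj V) (B' : (D.cat i).Obj V') :
    Function.Bijective (D.trMap i j e e' v w h (B := B) (B' := B')) :=
  D.subcartesian i j (CatPB.homMk (P := ⟨V, W, e⟩) (Q := ⟨V', W', e'⟩) v w h) B B'

theorem trMap_trMap (i j l : ι) {V V' : 𝒱 i} {W W' : 𝒱 j} {X X' : 𝒱 l}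
    (e₁ : (φ i).obj V = (φ j).obj W) (e₁' : (φ i).obj V' = (φ j).obj W')
    (e₂ : (φ j).obj W = (φ l).obj X) (e₂' : (φ j).obj W' = (φ l).obj X')
    (v : V ⟶ V') (w : W ⟶ W') (y : X ⟶ X') (h₁ : HEq ((φ i).map v) ((φ j).map w))
    (h₂ : HEq ((φ j).map w) ((φ l).map y)) {B : (D.cat i).Obj V} {B' : (D.cat i).Obj V'}
    (x : (D.cat i).Hom v B B') :
    HEq (D.trMap j l e₂ e₂' w y h₂ (D.trMap i j e₁ e₁' v w h₁ x))
      (D.trMap i l (e₁.trans e₂) (e₁'.trans e₂') v y (h₁.trans h₂) x) :=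
  D.map_cocycle i j l V V' W W' X X' e₁ e₂ e₁' e₂' v w y _ _ _ B B' x

variable (χ : LiftChoice φ)

abbrev DescObj (U : 𝒰) : Type u := (D.cat (χ.obj U).i).Obj (χ.obj U).V

def chartObj {U : 𝒰} (i : ι) (V : 𝒱 i) (e : (φ i).obj V = U) (B : D.DescObj χ U) :
    (D.cat i).Obj V :=
  D.trObj (χ.obj U).i i ((χ.obj U).e.trans e.symm) B

abbrev chartHom {U U' : 𝒰} {f : U ⟶ U'} (L : HomLift φ f) (B : D.DescObj χ U)
    (B' : D.DescObj χ U') : ModuleCat.{u} k :=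
  (D.cat L.i).Hom L.v (D.chartObj χ L.i L.V L.e B) (D.chartObj χ L.i L.V' L.e' B')

def relift {U U' : 𝒰} {f : U ⟶ U'} (L M : HomLift φ f) {B : D.DescObj χ U}
    {B' : D.DescObj χ U'} (x : D.chartHom χ L B B') : D.chartHom χ M B B' :=
  (D.cat M.i).castHom rfl rfl HEq.rfl
    (heq_of_eq (D.trObj_trObj _ _ _ ((χ.obj U).e.trans L.e.symm) (L.e.trans M.e.symm) B))
    (heq_of_eq (D.trObj_trObj _ _ _ ((χ.obj U').e.trans L.e'.symm) (L.e'.trans M.e'.symm) B'))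
    (D.trMap L.i M.i (L.e.trans M.e.symm) (L.e'.trans M.e'.symm) L.v M.v (L.hv.trans M.hv.symm) x)

section relift

variable {U U' : 𝒰} {f : U ⟶ U'} (L M : HomLift φ f) {B : D.DescObj χ U} {B' : D.DescObj χ U'}

theorem relift_heq (x : D.chartHom χ L B B') :
    HEq (D.relift χ L M x)
      (D.trMap L.i M.i (L.e.trans M.e.symm) (L.e'.trans M.e'.symm) L.v M.v
        (L.hv.trans M.hv.symm) x) :=
  (D.cat M.i).castHom_heq _ _ _ _ _ _

theorem relift_relift (N : HomLift φ f) (x : D.chartHom χ L B B') :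
    D.relift χ M N (D.relift χ L M x) = D.relift χ L N x := by
  refine eq_of_heq ((D.relift_heq χ M N _).trans ?_)
  refine ((D.iso M.i N.i).map_heq_map rfl rfl HEq.rfl
    (heq_of_eq (D.trObj_trObj _ _ _ ((χ.obj U).e.trans L.e.symm) (L.e.trans M.e.symm) B)).symm
    (heq_of_eq (D.trObj_trObj _ _ _ ((χ.obj U').e.trans L.e'.symm) (L.e'.trans M.e'.symm)
      B')).symm (D.relift_heq χ L M x)).trans ?_
  exact (D.trMap_trMap _ _ _ _ _ _ _ _ _ _ _ _ x).trans (D.relift_heq χ L N x).symm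

theorem relift_bijective (B : D.DescObj χ U) (B' : D.DescObj χ U') :
    Function.Bijective (D.relift χ L M (B := B) (B' := B')) :=
  ((D.cat M.i).castHom_bijective _ _ _ _ _).comp (D.trMap_bijective _ _ _ _ _ _ _ _ _)

theorem relift_self (x : D.chartHom χ L B B') : D.relift χ L L x = x :=
  (D.relift_bijective χ L L B B').injective (D.relift_relift χ L L L x)

theorem relift_add (x y : D.chartHom χ L B B') :
    D.relift χ L M (x + y) = D.relift χ L M x + D.relift χ L M y := by
  dsimp only [relift, trMap]
  erw [(D.iso L.i M.i).map_add, (D.cat M.i).castHom_add]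

theorem relift_smul (r : k) (x : D.chartHom χ L B B') :
    D.relift χ L M (r • x) = r • D.relift χ L M x := by
  dsimp only [relift, trMap]
  erw [(D.iso L.i M.i).map_smul, (D.cat M.i).castHom_smul]

theorem relift_id {U : 𝒰} (i : ι) (V : 𝒱 i) (e : (φ i).obj V = U) (j : ι) (W : 𝒱 j)
    (e' : (φ j).obj W = U) (B : D.DescObj χ U) :
    D.relift χ (HomLift.id i V e) (HomLift.id j W e') ((D.cat i).id (D.chartObj χ i V e B)) =
      (D.cat j).id (D.chartObj χ j W e' B) := by
  refine eq_of_heq ((D.relift_heq χ _ _ _).trans ?_)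
  refine ((D.iso i j).map_id (V := ⟨V, W, e.trans e'.symm⟩) _).trans ?_
  exact ((D.cat j).Hcast_heq ((pbSndF (φ i) (φ j)).map_id
    (⟨V, W, e.trans e'.symm⟩ : CatPB _ _)).symm _).trans
    ((D.cat j).id_heq_id rfl (heq_of_eq
      (D.trObj_trObj _ i j ((χ.obj U).e.trans e.symm) (e.trans e'.symm) B)))

theorem relift_comp {U U' U'' : 𝒰} {g : U ⟶ U'} {f : U' ⟶ U''} (P Q : CompLift φ g f)
    {C : D.DescObj χ U} {B : D.DescObj χ U'} {A : D.DescObj χ U''}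
    (x : D.chartHom χ P.snd B A) (y : D.chartHom χ P.fst C B) :
    D.relift χ P.comp Q.comp ((D.cat P.i).comp x y) =
      (D.cat Q.i).comp (D.relift χ P.snd Q.snd x) (D.relift χ P.fst Q.fst y) := by
  refine eq_of_heq ((D.relift_heq χ _ _ _).trans ?_)
  refine ((D.iso P.i Q.i).map_comp
    (f := CatPB.homMk (P := ⟨P.V', Q.V', P.e'.trans Q.e'.symm⟩)
      (Q := ⟨P.V'', Q.V'', P.e''.trans Q.e''.symm⟩) P.v' Q.v' (P.hv'.trans Q.hv'.symm))
    (g := CatPB.homMk (P := ⟨P.V, Q.V, P.e.trans Q.e.symm⟩)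
      (Q := ⟨P.V', Q.V', P.e'.trans Q.e'.symm⟩) P.v Q.v (P.hv.trans Q.hv.symm)) x y).trans ?_
  exact (D.cat Q.i).comp_heq_comp_s10 rfl rfl rfl HEq.rfl HEq.rfl
    (heq_of_eq (D.trObj_trObj _ _ _ _ _ C)) (heq_of_eq (D.trObj_trObj _ _ _ _ _ B))
    (heq_of_eq (D.trObj_trObj _ _ _ _ _ A)) (D.relift_heq χ P.snd Q.snd x).symm
    (D.relift_heq χ P.fst Q.fst y).symm

end relift

theorem heq_of_relift_heq {X₁ Y₁ X₂ Y₂ : 𝒰} (hX : X₁ = X₂) (hY : Y₁ = Y₂)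
    {f₁ : X₁ ⟶ Y₁} {f₂ : X₂ ⟶ Y₂} (hf : HEq f₁ f₂) {B₁ : D.DescObj χ X₁}
    {A₁ : D.DescObj χ Y₁} {B₂ : D.DescObj χ X₂} {A₂ : D.DescObj χ Y₂} (hB : HEq B₁ B₂)
    (hA : HEq A₁ A₂) (z : D.chartHom χ (χ.hom f₁) B₁ A₁) (w : D.chartHom χ (χ.hom f₂) B₂ A₂)
    (L : HomLift φ f₁) (M : HomLift φ f₂) (hi : L.i = M.i) (hV : HEq L.V M.V)
    (hV' : HEq L.V' M.V') (hv : HEq L.v M.v)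
    (hzw : HEq (D.relift χ (χ.hom f₁) L z) (D.relift χ (χ.hom f₂) M w)) : HEq z w := by
  subst hX hY; cases hf; cases hB; cases hA
  obtain ⟨Li, LV, LV', Lv, Le, Le', Lhv⟩ := L
  obtain ⟨Mi, MV, MV', Mv, Me, Me', Mhv⟩ := M
  dsimp only at hi hV hV' hv
  subst hi; cases hV; cases hV'; cases hv
  exact heq_of_eq ((D.relift_bijective χ _ _ _ _).injective (eq_of_heq hzw))

def descComp {X Y Z : 𝒰} {f : Y ⟶ Z} {g : X ⟶ Y} {C : D.DescObj χ X} {B : D.DescObj χ Y}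
    {A : D.DescObj χ Z} (x : D.chartHom χ (χ.hom f) B A) (y : D.chartHom χ (χ.hom g) C B) :
    D.chartHom χ (χ.hom (g ≫ f)) C A :=
  D.relift χ (χ.comp g f).comp (χ.hom (g ≫ f))
    ((D.cat (χ.comp g f).i).comp (D.relift χ (χ.hom f) (χ.comp g f).snd x)
      (D.relift χ (χ.hom g) (χ.comp g f).fst y))

def descId {U : 𝒰} (A : D.DescObj χ U) : D.chartHom χ (χ.hom (𝟙 U)) A A :=
  D.relift χ (HomLift.id (χ.obj U).i (χ.obj U).V (χ.obj U).e) (χ.hom (𝟙 U))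
    ((D.cat (χ.obj U).i).id (D.chartObj χ (χ.obj U).i (χ.obj U).V (χ.obj U).e A))

theorem relift_descComp {X Y Z : 𝒰} {g : X ⟶ Y} {f : Y ⟶ Z} (Q : CompLift φ g f)
    {C : D.DescObj χ X} {B : D.DescObj χ Y} {A : D.DescObj χ Z}
    (x : D.chartHom χ (χ.hom f) B A) (y : D.chartHom χ (χ.hom g) C B) :
    D.relift χ (χ.hom (g ≫ f)) Q.comp (D.descComp χ x y) =
      (D.cat Q.i).comp (D.relift χ (χ.hom f) Q.snd x) (D.relift χ (χ.hom g) Q.fst y) := by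
  refine (D.relift_relift χ _ _ _ _).trans ((D.relift_comp χ (χ.comp g f) Q _ _).trans ?_)
  rw [relift_relift, relift_relift]

theorem relift_descId {U : 𝒰} (j : ι) (W : 𝒱 j) (e : (φ j).obj W = U) (A : D.DescObj χ U) :
    D.relift χ (χ.hom (𝟙 U)) (HomLift.id j W e) (D.descId χ A) =
      (D.cat j).id (D.chartObj χ j W e A) :=
  (D.relift_relift χ _ _ _ _).trans (D.relift_id χ _ _ _ j W e A)

theorem descComp_descId {X Y : 𝒰} {f : X ⟶ Y} {B : D.DescObj χ X} {A : D.DescObj χ Y}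
    (x : D.chartHom χ (χ.hom f) B A) : HEq (D.descComp χ x (D.descId χ B)) x := by
  let Q := CompLift.idLeft (χ.hom f)
  refine D.heq_of_relift_heq χ rfl rfl (heq_of_eq (Category.id_comp f)) HEq.rfl HEq.rfl _ _
    Q.comp (χ.hom f) rfl HEq.rfl HEq.rfl (heq_of_eq (Category.id_comp (χ.hom f).v)) ?_
  rw [D.relift_descComp χ Q]
  erw [D.relift_descId χ]
  exact (D.cat _).comp_id _

theorem descId_descComp {X Y : 𝒰} {f : X ⟶ Y} {B : D.DescObj χ X} {A : D.DescObj χ Y}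
    (x : D.chartHom χ (χ.hom f) B A) : HEq (D.descComp χ (D.descId χ A) x) x := by
  let Q := CompLift.idRight (χ.hom f)
  refine D.heq_of_relift_heq χ rfl rfl (heq_of_eq (Category.comp_id f)) HEq.rfl HEq.rfl _ _
    Q.comp (χ.hom f) rfl HEq.rfl HEq.rfl (heq_of_eq (Category.comp_id (χ.hom f).v)) ?_
  rw [D.relift_descComp χ Q]
  erw [D.relift_descId χ]
  exact (D.cat _).id_comp _

theorem descComp_assoc (h3 : CoversSimplices φ 3) {W X Y Z : 𝒰} {f : Y ⟶ Z} {g : X ⟶ Y}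
    {h : W ⟶ X} {E : D.DescObj χ W} {C : D.DescObj χ X} {B : D.DescObj χ Y}
    {A : D.DescObj χ Z} (x : D.chartHom χ (χ.hom f) B A) (y : D.chartHom χ (χ.hom g) C B)
    (z : D.chartHom χ (χ.hom h) E C) :
    HEq (D.descComp χ (D.descComp χ x y) z) (D.descComp χ x (D.descComp χ y z)) := by
  obtain ⟨m, V₀, V₁, V₂, V₃, t₁, t₂, t₃, e₀, e₁, e₂, e₃, ht₁, ht₂, ht₃⟩ :=
    h3.exists_common_lift₃ h g f
  let R₂₃ : CompLift φ g f := ⟨m, V₁, V₂, V₃, t₂, t₃, e₁, e₂, e₃, ht₂, ht₃⟩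
  let R₁₂ : CompLift φ h g := ⟨m, V₀, V₁, V₂, t₁, t₂, e₀, e₁, e₂, ht₁, ht₂⟩
  let R₁₂₃ : CompLift φ h (g ≫ f) := ⟨m, V₀, V₁, V₃, t₁, t₂ ≫ t₃, e₀, e₁, e₃, ht₁, R₂₃.comp.hv⟩
  let R₁₂₃' : CompLift φ (h ≫ g) f := ⟨m, V₀, V₂, V₃, t₁ ≫ t₂, t₃, e₀, e₂, e₃, R₁₂.comp.hv, ht₃⟩
  refine D.heq_of_relift_heq χ rfl rfl (heq_of_eq (Category.assoc h g f).symm) HEq.rfl HEq.rfl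
    _ _ R₁₂₃.comp R₁₂₃'.comp rfl HEq.rfl HEq.rfl (heq_of_eq (Category.assoc t₁ t₂ t₃).symm) ?_
  rw [D.relift_descComp χ R₁₂₃, D.relift_descComp χ R₁₂₃']
  erw [D.relift_descComp χ R₂₃, D.relift_descComp χ R₁₂]
  exact (D.cat m).assoc _ _ _

def descend (h3 : CoversSimplices φ 3) : GradedCat k 𝒰 where
  Obj := D.DescObj χ
  Hom f B B' := D.chartHom χ (χ.hom f) B B'
  comp := D.descComp χ
  id := D.descId χ
  comp_add_left x x' y := by
    erw [descComp, D.relift_add χ _ _ x x', GradedCat.comp_add_left, relift_add]; rfl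
  comp_add_right x y y' := by
    erw [descComp, D.relift_add χ _ _ y y', GradedCat.comp_add_right, relift_add]; rfl
  comp_smul_left r x y := by
    erw [descComp, D.relift_smul χ _ _ r x, GradedCat.comp_smul_left, relift_smul]; rfl
  comp_smul_right r x y := by
    erw [descComp, D.relift_smul χ _ _ r y, GradedCat.comp_smul_right, relift_smul]; rfl
  comp_id := D.descComp_descId χ
  id_comp := D.descId_descComp χ
  assoc := D.descComp_assoc χ h3

def toDescendObj (i : ι) {V : 𝒱 i} (B : (D.cat i).Obj V) : D.DescObj χ ((φ i).obj V) :=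
  D.trObj i (χ.obj ((φ i).obj V)).i (χ.obj ((φ i).obj V)).e.symm B

theorem chartObj_toDescendObj_self (i : ι) {V : 𝒱 i} (e : (φ i).obj V = (φ i).obj V)
    (B : (D.cat i).Obj V) : D.chartObj χ i V e (D.toDescendObj χ i B) = B :=
  (D.trObj_trObj _ _ _ _ _ B).trans (D.trObj_self i _ B)

theorem toDescendObj_trObj (i j : ι) {V : 𝒱 i} {W : 𝒱 j} (e : (φ i).obj V = (φ j).obj W)
    (B : (D.cat i).Obj V) : HEq (D.toDescendObj χ j (D.trObj i j e B)) (D.toDescendObj χ i B) := by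
  have chart_congr : ∀ {U U' : 𝒰} (_ : U = U')
      (h : (φ i).obj V = (φ (χ.obj U).i).obj (χ.obj U).V)
      (h' : (φ i).obj V = (φ (χ.obj U').i).obj (χ.obj U').V),
      HEq (D.trObj i _ h B) (D.trObj i _ h' B) := by
    rintro U _ rfl _ _; rfl
  exact (heq_of_eq (D.trObj_trObj _ _ _ _ _ B)).trans (chart_congr e.symm _ _)

theorem toDescendObj_bijective (i : ι) (V : 𝒱 i) :
    Function.Bijective (D.toDescendObj χ i (V := V)) :=
  D.trObj_bijective _ _ _

def toDescendMap (i : ι) {V V' : 𝒱 i} (v : V ⟶ V') {B : (D.cat i).Obj V}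
    {B' : (D.cat i).Obj V'} (x : (D.cat i).Hom v B B') :
    D.chartHom χ (χ.hom ((φ i).map v)) (D.toDescendObj χ i B) (D.toDescendObj χ i B') :=
  D.relift χ (HomLift.ofMap i v) _ ((D.cat i).castHom rfl rfl HEq.rfl
    (heq_of_eq (D.chartObj_toDescendObj_self χ i rfl B)).symm
    (heq_of_eq (D.chartObj_toDescendObj_self χ i rfl B')).symm x)

section toDescendMap

variable (i : ι) {V V' V'' : 𝒱 i}

theorem toDescendMap_bijective (v : V ⟶ V') (B : (D.cat i).Obj V) (B' : (D.cat i).Obj V') :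
    Function.Bijective (D.toDescendMap χ i v (B := B) (B' := B')) :=
  (D.relift_bijective χ _ _ _ _).comp ((D.cat i).castHom_bijective _ _ _ _ _)

theorem relift_toDescendMap (v : V ⟶ V') {B : (D.cat i).Obj V} {B' : (D.cat i).Obj V'}
    (x : (D.cat i).Hom v B B') :
    HEq (D.relift χ _ (HomLift.ofMap i v) (D.toDescendMap χ i v x)) x :=
  (heq_of_eq ((D.relift_relift χ _ _ _ _).trans (D.relift_self χ _ _))).trans
    ((D.cat i).castHom_heq _ _ _ _ _ _)

theorem toDescendMap_id (B : (D.cat i).Obj V) :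
    HEq (D.toDescendMap χ i (𝟙 V) ((D.cat i).id B)) (D.descId χ (D.toDescendObj χ i B)) := by
  refine D.heq_of_relift_heq χ rfl rfl (heq_of_eq ((φ i).map_id V)) HEq.rfl HEq.rfl _ _
    (HomLift.ofMap i (𝟙 V)) (HomLift.id i V rfl) rfl HEq.rfl HEq.rfl HEq.rfl ?_
  rw [relift_descId]
  exact (D.relift_toDescendMap χ i _ _).trans
    ((D.cat i).id_heq_id rfl (heq_of_eq (D.chartObj_toDescendObj_self χ i rfl B)).symm)

theorem toDescendMap_comp (f : V' ⟶ V'') (g : V ⟶ V') {C : (D.cat i).Obj V}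
    {B : (D.cat i).Obj V'} {A : (D.cat i).Obj V''} (x : (D.cat i).Hom f B A)
    (y : (D.cat i).Hom g C B) :
    HEq (D.toDescendMap χ i (g ≫ f) ((D.cat i).comp x y))
      (D.descComp χ (D.toDescendMap χ i f x) (D.toDescendMap χ i g y)) := by
  let Q : CompLift φ ((φ i).map g) ((φ i).map f) :=
    ⟨i, V, V', V'', g, f, rfl, rfl, rfl, HEq.rfl, HEq.rfl⟩
  refine D.heq_of_relift_heq χ rfl rfl (heq_of_eq ((φ i).map_comp g f)) HEq.rfl HEq.rfl _ _
    (HomLift.ofMap i (g ≫ f)) Q.comp rfl HEq.rfl HEq.rfl HEq.rfl ?_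
  rw [D.relift_descComp χ Q]
  exact (D.relift_toDescendMap χ i _ _).trans ((D.cat i).comp_heq_comp_s10 rfl rfl rfl HEq.rfl
    HEq.rfl (heq_of_eq (D.chartObj_toDescendObj_self χ i rfl C)).symm
    (heq_of_eq (D.chartObj_toDescendObj_self χ i rfl B)).symm
    (heq_of_eq (D.chartObj_toDescendObj_self χ i rfl A)).symm
    (D.relift_toDescendMap χ i f x).symm (D.relift_toDescendMap χ i g y).symm)

end toDescendMap

theorem toDescendMap_trMap (i j : ι) {V V' : 𝒱 i} {W W' : 𝒱 j} (e : (φ i).obj V = (φ j).obj W)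
    (e' : (φ i).obj V' = (φ j).obj W') (v : V ⟶ V') (w : W ⟶ W')
    (h : HEq ((φ i).map v) ((φ j).map w)) {B : (D.cat i).Obj V} {B' : (D.cat i).Obj V'}
    (x : (D.cat i).Hom v B B') :
    HEq (D.toDescendMap χ j w (D.trMap i j e e' v w h x)) (D.toDescendMap χ i v x) := by
  let M : HomLift φ ((φ i).map v) := ⟨j, W, W', w, e.symm, e'.symm, h.symm⟩
  refine D.heq_of_relift_heq χ e.symm e'.symm h.symm (D.toDescendObj_trObj χ i j e B)
    (D.toDescendObj_trObj χ i j e' B') _ _ (HomLift.ofMap j w) M rfl HEq.rfl HEq.rfl HEq.rfl ?_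
  refine (D.relift_toDescendMap χ j w _).trans ?_
  refine HEq.trans ?_ (heq_of_eq (D.relift_relift χ _ _ _ _)).symm
  refine HEq.trans ?_ (D.relift_heq χ _ _ _).symm
  exact (D.iso i j).map_heq_map rfl rfl HEq.rfl
    (heq_of_eq (D.chartObj_toDescendObj_self χ i rfl B)).symm
    (heq_of_eq (D.chartObj_toDescendObj_self χ i rfl B')).symm
    ((D.cat i).castHom_heq _ _ _ _ _ _).symm

def toDescend (h3 : CoversSimplices φ 3) (i : ι) :
    GradedFunctor k (𝟭 (𝒱 i)) (D.cat i) ((D.descend χ h3).restrict (φ i)) where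
  obj := D.toDescendObj χ i
  map v _ _ x := D.toDescendMap χ i v x
  map_add v B B' x y := by
    erw [toDescendMap, GradedCat.castHom_add, relift_add]; rfl
  map_smul v B B' r x := by
    erw [toDescendMap, GradedCat.castHom_smul, relift_smul]; rfl
  map_id B := (D.toDescendMap_id χ i B).trans
    ((D.descend χ h3).Hcast_heq ((φ i).map_id _).symm _).symm
  map_comp x y := (D.toDescendMap_comp χ i _ _ x y).trans
    ((D.descend χ h3).Hcast_heq ((φ i).map_comp _ _).symm _).symm

theorem exists_effective (h : ∀ m ≤ 3, CoversSimplices φ m) :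
    ∃ (𝔟₀ : GradedCat k 𝒰) (σ : ∀ i, GradedFunctor k (𝟭 (𝒱 i)) (D.cat i) (𝔟₀.restrict (φ i))),
      (∀ i, (∀ V : 𝒱 i, Function.Bijective fun B : (D.cat i).Obj V => (σ i).obj B) ∧
        (σ i).Subcartesian) ∧
      (∀ (i j : ι) (P : CatPB (φ i) (φ j)) (B : (D.cat i).Obj P.left),
        HEq ((σ j).obj ((D.iso i j).obj (V := P) B)) ((σ i).obj B)) ∧
      (∀ (i j : ι) (P Q : CatPB (φ i) (φ j)) (f : P ⟶ Q) (B : (D.cat i).Obj P.left)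
        (B' : (D.cat i).Obj Q.left) (x : (D.cat i).Hom f.1.1 B B'),
        HEq ((σ j).map f.1.2 ((D.iso i j).map f x)) ((σ i).map f.1.1 x)) := by
  let χ := LiftChoice.ofCovers fun m hm => h m (hm.trans (by norm_num))
  have h3 := h 3 le_rfl
  exact ⟨D.descend χ h3, D.toDescend χ h3,
    fun i => ⟨D.toDescendObj_bijective χ i, D.toDescendMap_bijective χ i⟩,
    fun i j P B => D.toDescendObj_trObj χ i j P.eq B,
    fun i j P Q f _ _ x => D.toDescendMap_trMap χ i j P.eq Q.eq f.1.1 f.1.2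
      ((conj_eqToHom_iff_heq _ _ P.eq Q.eq).1 f.2) x⟩

end DescentDatum

end Descent

end

/-- Fix `n ∈ ℕ ∪ {∞}` and endow `Cat` with the pretopology of `n`-covers.  For an
`n`-cover `(φᵢ : 𝒱ᵢ ⥤ 𝒰)`, restriction of map-graded categories along the cover
defines a comparison functor from `Map(𝒰)` to descent data of map-graded categories.
If `n ≥ 2` this comparison functor is fully faithful (morphisms glue uniquely):
`Map` is a prestack over `Cat`; if `n ≥ 3` it is moreover an equivalence (every descent
datum is effective): `Map` is a stack over `Cat`. -/
theorem statement10 (k : Type u) [CommRing k] (n : ℕ∞) {𝒰 : Type u} [Category.{u} 𝒰]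
    {ι : Type u} (𝒱 : ι → Type u) [∀ i, Category.{u} (𝒱 i)] (φ : ∀ i, 𝒱 i ⥤ 𝒰)
    (hcov : ∀ m : ℕ, (m : ℕ∞) ≤ n → ∀ s : NerveTot 𝒰 m,
      ∃ i, ∃ t : NerveTot (𝒱 i) m, NerveTot.map (φ i) t = s) :
    -- if `n ≥ 2`, `Map` is a prestack over `Cat`: morphisms glue uniquely
    ((2 ≤ n) → ∀ (𝔟 𝔞 : GradedCat k 𝒰)
      (H : ∀ i, GradedFunctor k (𝟭 (𝒱 i)) (𝔟.restrict (φ i)) (𝔞.restrict (φ i))),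
      -- compatibility of the family over the pairwise pullbacks
      (∀ (i j : ι) (P : CatPB (φ i) (φ j)) (B₁ : 𝔟.Obj ((φ i).obj P.left))
        (B₂ : 𝔟.Obj ((φ j).obj P.right)), HEq B₁ B₂ →
        HEq ((H i).obj (V := P.left) B₁) ((H j).obj (V := P.right) B₂)) →
      (∀ (i j : ι) (P Q : CatPB (φ i) (φ j)) (f : P ⟶ Q)
        (B₁ : 𝔟.Obj ((φ i).obj P.left)) (B₁' : 𝔟.Obj ((φ i).obj Q.left))
        (B₂ : 𝔟.Obj ((φ j).obj P.right)) (B₂' : 𝔟.Obj ((φ j).obj Q.right))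
        (x : 𝔟.Hom ((φ i).map f.1.1) B₁ B₁') (y : 𝔟.Hom ((φ j).map f.1.2) B₂ B₂'),
        HEq B₁ B₂ → HEq B₁' B₂' → HEq x y →
        HEq ((H i).map f.1.1 x) ((H j).map f.1.2 y)) →
      ∃! G : GradedFunctor k (𝟭 𝒰) 𝔟 𝔞, ∀ i, restrictAlong (φ i) G = H i) ∧
    -- if `n ≥ 3`, `Map` is a stack over `Cat`: every descent datum is effective
    ((3 ≤ n) → ∀ (𝔟 : ∀ i, GradedCat k (𝒱 i))
      (ρ : ∀ i j, GradedFunctor k (𝟭 (CatPB (φ i) (φ j)))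
        ((𝔟 i).restrict (pbFstF (φ i) (φ j))) ((𝔟 j).restrict (pbSndF (φ i) (φ j)))),
      -- the `ρᵢⱼ` are isomorphisms
      (∀ i j (P : CatPB (φ i) (φ j)),
        Function.Bijective fun B : (𝔟 i).Obj P.left => (ρ i j).obj (V := P) B) →
      (∀ i j, (ρ i j).Subcartesian) →
      -- cocycle condition on triple pullbacks, on objects
      (∀ (i j l : ι) (V₁ : 𝒱 i) (V₂ : 𝒱 j) (V₃ : 𝒱 l)
        (h₁₂ : (φ i).obj V₁ = (φ j).obj V₂) (h₂₃ : (φ j).obj V₂ = (φ l).obj V₃)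
        (B : (𝔟 i).Obj V₁),
        (ρ j l).obj (V := ⟨V₂, V₃, h₂₃⟩) ((ρ i j).obj (V := ⟨V₁, V₂, h₁₂⟩) B) =
          (ρ i l).obj (V := ⟨V₁, V₃, h₁₂.trans h₂₃⟩) B) →
      -- cocycle condition on triple pullbacks, on graded morphisms
      (∀ (i j l : ι) (V₁ V₁' : 𝒱 i) (V₂ V₂' : 𝒱 j) (V₃ V₃' : 𝒱 l)
        (h₁₂ : (φ i).obj V₁ = (φ j).obj V₂) (h₂₃ : (φ j).obj V₂ = (φ l).obj V₃)
        (h₁₂' : (φ i).obj V₁' = (φ j).obj V₂') (h₂₃' : (φ j).obj V₂' = (φ l).obj V₃')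
        (v₁ : V₁ ⟶ V₁') (v₂ : V₂ ⟶ V₂') (v₃ : V₃ ⟶ V₃')
        (c₁₂ : (φ i).map v₁ = eqToHom h₁₂ ≫ (φ j).map v₂ ≫ eqToHom h₁₂'.symm)
        (c₂₃ : (φ j).map v₂ = eqToHom h₂₃ ≫ (φ l).map v₃ ≫ eqToHom h₂₃'.symm)
        (c₁₃ : (φ i).map v₁ = eqToHom (h₁₂.trans h₂₃) ≫ (φ l).map v₃ ≫
          eqToHom ((h₁₂'.trans h₂₃').symm))
        (B : (𝔟 i).Obj V₁) (B' : (𝔟 i).Obj V₁') (x : (𝔟 i).Hom v₁ B B'),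
        HEq ((ρ j l).map (V := ⟨V₂, V₃, h₂₃⟩) (V' := ⟨V₂', V₃', h₂₃'⟩)
            (⟨(v₂, v₃), c₂₃⟩ : (⟨V₂, V₃, h₂₃⟩ : CatPB (φ j) (φ l)) ⟶ ⟨V₂', V₃', h₂₃'⟩)
            ((ρ i j).map (V := ⟨V₁, V₂, h₁₂⟩) (V' := ⟨V₁', V₂', h₁₂'⟩)
              (⟨(v₁, v₂), c₁₂⟩ : (⟨V₁, V₂, h₁₂⟩ : CatPB (φ i) (φ j)) ⟶ ⟨V₁', V₂', h₁₂'⟩)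
              x))
          ((ρ i l).map (V := ⟨V₁, V₃, h₁₂.trans h₂₃⟩) (V' := ⟨V₁', V₃', h₁₂'.trans h₂₃'⟩)
            (⟨(v₁, v₃), c₁₃⟩ :
              (⟨V₁, V₃, h₁₂.trans h₂₃⟩ : CatPB (φ i) (φ l)) ⟶ ⟨V₁', V₃', h₁₂'.trans h₂₃'⟩)
            x)) →
      -- the descent datum is effective
      ∃ (𝔟₀ : GradedCat k 𝒰)
        (σ : ∀ i, GradedFunctor k (𝟭 (𝒱 i)) (𝔟 i) (𝔟₀.restrict (φ i))),
        (∀ i, (∀ V : 𝒱 i, Function.Bijective fun B : (𝔟 i).Obj V => (σ i).obj B) ∧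
          (σ i).Subcartesian) ∧
        (∀ (i j : ι) (P : CatPB (φ i) (φ j)) (B : (𝔟 i).Obj P.left),
          HEq ((σ j).obj ((ρ i j).obj (V := P) B)) ((σ i).obj B)) ∧
        (∀ (i j : ι) (P Q : CatPB (φ i) (φ j)) (f : P ⟶ Q) (B : (𝔟 i).Obj P.left)
          (B' : (𝔟 i).Obj Q.left) (x : (𝔟 i).Hom f.1.1 B B'),
          HEq ((σ j).map f.1.2 ((ρ i j).map f x)) ((σ i).map f.1.1 x))) := by
  refine ⟨fun hn 𝔟 𝔞 H hco hcm => ?_, fun hn 𝔟 ρ hbij hsub hobj hmap => ?_⟩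
  · exact existsUnique_glue ⟨hco, hcm⟩ fun m hm => hcov m (le_trans (by exact_mod_cast hm) hn)
  · exact DescentDatum.exists_effective ⟨𝔟, ρ, hbij, hsub, hobj, hmap⟩
      fun m hm => hcov m (le_trans (by exact_mod_cast hm) hn)

end MapGr
end
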